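/- arXiv:math/0508112 — 7 statements merged into one kernel-verified Lean document; each statement's English description precedes it below -/
import Mathlib

section
/- For n ≥ 1, the number of permutations of {1,...,n} with d descents ending in k equals the number with d descents beginning with n+1-k. -/
open Finset

/-- Number of descents of a permutation of `Fin n` (positions `i` with `π(i) > π(i+1)`). -/
def descents (n : ℕ) (π : Equiv.Perm (Fin n)) : ℕ :=
  (Finset.univ.filter (fun i : Fin n =>
    ∃ j : Fin n, (j : ℕ) = (i : ℕ) + 1 ∧ π j < π i)).card

/-- `A n d k` : number of permutations of `{1,…,n}` with exactly `d` descents and first value `k`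
(1-based values; `d : ℤ`, so `A n d k = 0` when `d < 0`). -/
def A (n : ℕ) (d : ℤ) (k : ℕ) : ℕ :=
  (Finset.univ.filter (fun π : Equiv.Perm (Fin n) =>
    (descents n π : ℤ) = d ∧ ∃ i : Fin n, (i : ℕ) = 0 ∧ (π i : ℕ) + 1 = k)).card

/-- `Alast n d k` : number with `d` descents and last value `k`. -/
def Alast (n : ℕ) (d : ℤ) (k : ℕ) : ℕ :=
  (Finset.univ.filter (fun π : Equiv.Perm (Fin n) =>
    (descents n π : ℤ) = d ∧ ∃ i : Fin n, (i : ℕ) + 1 = n ∧ (π i : ℕ) + 1 = k)).card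

/-- Eulerian number: permutations of `{1,…,n}` with `d` descents. -/
def Eul (n : ℕ) (d : ℤ) : ℕ :=
  (Finset.univ.filter (fun π : Equiv.Perm (Fin n) => (descents n π : ℤ) = d)).card

/-!
The reverse-complement `π ↦ rev ∘ π ∘ rev` is an involution of `S_n`. It maps a descent at
position `i` to a descent at position `n - 2 - i`, so it preserves the number of descents, and it
turns the last value `k` into the first value `n + 1 - k`.
-/

def revCompl (n : ℕ) : Equiv.Perm (Fin n) ≃ Equiv.Perm (Fin n) :=
  Fin.revPerm.permCongr

@[simp]
lemma revCompl_apply_apply {n : ℕ} (π : Equiv.Perm (Fin n)) (i : Fin n) :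
    revCompl n π i = (π i.rev).rev :=
  rfl

def IsDescent {n : ℕ} (π : Equiv.Perm (Fin n)) (i : Fin n) : Prop :=
  ∃ j : Fin n, (j : ℕ) = (i : ℕ) + 1 ∧ π j < π i

instance {n : ℕ} (π : Equiv.Perm (Fin n)) : DecidablePred (IsDescent π) :=
  fun i => inferInstanceAs (Decidable (∃ j : Fin n, (j : ℕ) = (i : ℕ) + 1 ∧ π j < π i))

lemma descents_eq_card_isDescent (n : ℕ) (π : Equiv.Perm (Fin n)) :
    descents n π = #{i | IsDescent π i} :=
  rfl

lemma IsDescent.val_add_one_lt {n : ℕ} {π : Equiv.Perm (Fin n)} {i : Fin n}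
    (h : IsDescent π i) : (i : ℕ) + 1 < n := by
  obtain ⟨j, hj, -⟩ := h
  exact hj ▸ j.isLt

lemma isDescent_revCompl_iff {n : ℕ} (π : Equiv.Perm (Fin n)) {i : Fin n} (hi : (i : ℕ) + 1 < n) :
    IsDescent (revCompl n π) i ↔ IsDescent π ⟨n - 2 - i, by omega⟩ := by
  have hj : (⟨(i : ℕ) + 1, hi⟩ : Fin n).rev = ⟨n - 2 - i, by omega⟩ := by
    ext; simp only [Fin.val_rev]; omega
  have hi' : (i.rev : ℕ) = n - 2 - i + 1 := by simp only [Fin.val_rev]; omega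
  constructor
  · rintro ⟨j, hj', hlt⟩
    obtain rfl : j = ⟨(i : ℕ) + 1, hi⟩ := Fin.ext hj'
    rw [revCompl_apply_apply, revCompl_apply_apply, Fin.rev_lt_rev, hj] at hlt
    exact ⟨i.rev, hi', hlt⟩
  · rintro ⟨j, hj', hlt⟩
    obtain rfl : j = i.rev := Fin.ext (hj'.trans hi'.symm)
    refine ⟨⟨(i : ℕ) + 1, hi⟩, rfl, ?_⟩
    rwa [revCompl_apply_apply, revCompl_apply_apply, Fin.rev_lt_rev, hj]

lemma descents_revCompl (n : ℕ) (π : Equiv.Perm (Fin n)) :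
    descents n (revCompl n π) = descents n π := by
  rw [descents_eq_card_isDescent, descents_eq_card_isDescent]
  have reflect_reflect (i : Fin n) (hi : (i : ℕ) + 1 < n) :
      (⟨n - 2 - (n - 2 - i), by omega⟩ : Fin n) = i := by
    ext; simp only; omega
  refine card_nbij' (fun i => ⟨n - 2 - i, by omega⟩) (fun i => ⟨n - 2 - i, by omega⟩)
    ?_ ?_ ?_ ?_
  · intro i hi
    simp only [mem_coe, mem_filter, mem_univ, true_and] at hi ⊢
    exact (isDescent_revCompl_iff π hi.val_add_one_lt).1 hi
  · intro i hi
    simp only [mem_coe, mem_filter, mem_univ, true_and] at hi ⊢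
    have hi' := hi.val_add_one_lt
    rwa [isDescent_revCompl_iff π (by simp only; omega), reflect_reflect i hi']
  all_goals
    intro i hi
    simp only [mem_coe, mem_filter, mem_univ, true_and] at hi
    exact reflect_reflect i hi.val_add_one_lt

/-- For `k = 0` or `k > n` both sides are false, the right one through truncated subtraction. -/
lemma exists_last_iff_exists_first_revCompl (n : ℕ) (π : Equiv.Perm (Fin n)) (k : ℕ) :
    (∃ i : Fin n, (i : ℕ) + 1 = n ∧ (π i : ℕ) + 1 = k) ↔
      ∃ i : Fin n, (i : ℕ) = 0 ∧ (revCompl n π i : ℕ) + 1 = n + 1 - k := by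
  constructor
  · rintro ⟨i, hi, hk⟩
    refine ⟨i.rev, ?_, ?_⟩ <;> simp only [revCompl_apply_apply, Fin.rev_rev, Fin.val_rev] <;> omega
  · rintro ⟨i, hi, hk⟩
    have := (π i.rev).isLt
    refine ⟨i.rev, ?_, ?_⟩ <;> simp only [revCompl_apply_apply, Fin.val_rev] at hk ⊢ <;> omega

theorem stmt2_general (n : ℕ) (d : ℤ) (k : ℕ) :
    Alast n d k = A n d (n + 1 - k) := by
  refine card_equiv (revCompl n) fun π => ?_
  simp only [mem_filter, mem_univ, true_and, descents_revCompl, exists_last_iff_exists_first_revCompl]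

theorem stmt2 (n : ℕ) (hn : 1 ≤ n) (d : ℤ) (k : ℕ) (hk1 : 1 ≤ k) (hkn : k ≤ n) :
    Alast n d k = A n d (n + 1 - k) :=
  stmt2_general n d k
end

section
/- For n > 1 and 1 ≤ k ≤ n-1, A(n,d,k) - A(n-1,d,k) = A(n,d,k+1) - A(n-1,d-1,k). -/
/-!
Split the permutations with first value `k` according to their second value. Those continuing
with `k + 1` are, after deleting the first entry and standardising, the permutations of `n - 1`
letters with first value `k` and the same number of descents; those with first value `k + 1`
continuing with `k` correspond likewise to permutations of `n - 1` letters with one descent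
fewer. In all other permutations with first value `k` or `k + 1` the values `k` and `k + 1` are
not adjacent, so exchanging them is a descent-preserving bijection between the two remainders.
-/

open Finset

namespace Descents

open Equiv

variable {m : ℕ}

lemma A_succ_val_succ (d : ℤ) (v : Fin (m + 1)) :
    A (m + 1) d (v + 1) = #{π : Perm (Fin (m + 1)) | (descents (m + 1) π : ℤ) = d ∧ π 0 = v} := by
  unfold A
  congr 1
  refine filter_congr fun π _ => and_congr_right' ⟨?_, fun h => ⟨0, rfl, by rw [h]⟩⟩
  rintro ⟨i, hi, hv⟩
  obtain rfl : i = 0 := Fin.ext hi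
  exact Fin.ext (by omega)

lemma descents_succ (π : Perm (Fin (m + 1))) :
    descents (m + 1) π = #{i : Fin m | π i.succ < π i.castSucc} := by
  have hlast : ¬ ∃ j : Fin (m + 1), (j : ℕ) = (Fin.last m : ℕ) + 1 ∧ π j < π (Fin.last m) :=
    fun ⟨j, hj, _⟩ => by rw [Fin.val_last] at hj; omega
  have hcast (i : Fin m) : (∃ j : Fin (m + 1), (j : ℕ) = (i.castSucc : ℕ) + 1 ∧
      π j < π i.castSucc) ↔ π i.succ < π i.castSucc :=
    ⟨fun ⟨j, hj, hlt⟩ => by rwa [show j = i.succ from Fin.ext hj] at hlt,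
      fun h => ⟨i.succ, rfl, h⟩⟩
  rw [descents, card_filter, card_filter, Fin.sum_univ_castSucc, if_neg hlast, add_zero]
  simp only [hcast]

/-- The permutation of `Fin (m + 1)` with first value `b`, followed by the values of `σ`
shifted past `b`. -/
def prepend (b : Fin (m + 1)) (σ : Perm (Fin m)) : Perm (Fin (m + 1)) :=
  (finSuccEquiv m).trans (σ.optionCongr.trans (finSuccEquiv' b).symm)

@[simp] lemma prepend_zero (b : Fin (m + 1)) (σ : Perm (Fin m)) : prepend b σ 0 = b := by
  simp [prepend]

@[simp] lemma prepend_succ (b : Fin (m + 1)) (σ : Perm (Fin m)) (i : Fin m) :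
    prepend b σ i.succ = b.succAbove (σ i) := by
  simp [prepend]

lemma prepend_injective (b : Fin (m + 1)) : Function.Injective (prepend b) := fun σ τ h =>
  Equiv.ext fun i => Fin.succAbove_right_injective (p := b) <| by
    rw [← prepend_succ, ← prepend_succ, h]

lemma exists_prepend_eq {b : Fin (m + 1)} {π : Perm (Fin (m + 1))} (hb : π 0 = b) :
    ∃ σ : Perm (Fin m), prepend b σ = π := by
  set E : Perm (Option (Fin m)) := (finSuccEquiv m).symm.trans (π.trans (finSuccEquiv' b))
  have hE : E none = none := by simp [E, hb]
  refine ⟨removeNone E, Equiv.ext fun i => ?_⟩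
  rw [prepend, map_equiv_removeNone, hE, swap_self]
  simp [E]

lemma descents_prepend (b : Fin (m + 2)) (σ : Perm (Fin (m + 1))) :
    descents (m + 2) (prepend b σ) =
      (if b.succAbove (σ 0) < b then 1 else 0) + descents (m + 1) σ := by
  rw [descents_succ, descents_succ, card_filter, card_filter, Fin.sum_univ_succ]
  congr 1
  refine sum_congr rfl fun i _ => ?_
  rw [← Fin.succ_castSucc, prepend_succ, prepend_succ]
  simp only [Fin.succAbove_lt_succAbove_iff]

lemma card_prepend (b : Fin (m + 1)) (p : Perm (Fin (m + 1)) → Prop) [DecidablePred p] :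
    #{σ : Perm (Fin m) | p (prepend b σ)} = #{π : Perm (Fin (m + 1)) | π 0 = b ∧ p π} := by
  refine card_bij (fun σ _ => prepend b σ) (fun σ hσ => ?_)
    (fun σ _ τ _ h => prepend_injective b h) (fun π hπ => ?_)
  · simp only [mem_filter, mem_univ, true_and] at hσ ⊢
    exact ⟨prepend_zero b σ, hσ⟩
  · simp only [mem_filter, mem_univ, true_and] at hπ
    obtain ⟨σ, rfl⟩ := exists_prepend_eq hπ.1
    exact ⟨σ, by simpa using hπ.2, rfl⟩

lemma card_first_two_eq_A (d : ℤ) (b : Fin (m + 2)) (c : Fin (m + 1)) :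
    #{π : Perm (Fin (m + 2)) | ((descents (m + 2) π : ℤ) = d ∧ π 0 = b) ∧ π 1 = b.succAbove c} =
      A (m + 1) (d - if b.succAbove c < b then 1 else 0) (c + 1) := by
  calc _ = #{π : Perm (Fin (m + 2)) |
          π 0 = b ∧ ((descents (m + 2) π : ℤ) = d ∧ π 1 = b.succAbove c)} :=
        congrArg card <| filter_congr fun π _ => by tauto
    _ = _ := by
      rw [← card_prepend, A_succ_val_succ]
      congr 1
      refine filter_congr fun σ _ => ?_
      rw [← Fin.succ_zero_eq_one, prepend_succ, Fin.succAbove_right_inj, descents_prepend]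
      constructor <;> rintro ⟨hd, rfl⟩ <;> refine ⟨?_, rfl⟩ <;> push_cast at hd ⊢ <;> omega

lemma A_succ_val_succ_eq_card_add_card (d : ℤ) (b c : Fin (m + 2)) :
    A (m + 2) d (b + 1) =
      #{π : Perm (Fin (m + 2)) | ((descents (m + 2) π : ℤ) = d ∧ π 0 = b) ∧ π 1 = c} +
        #{π : Perm (Fin (m + 2)) | ((descents (m + 2) π : ℤ) = d ∧ π 0 = b) ∧ π 1 ≠ c} := by
  rw [A_succ_val_succ, ← card_filter_add_card_filter_not (p := fun π => π 1 = c), filter_filter,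
    filter_filter]

lemma swap_lt_swap_iff {n : ℕ} {x y u v : Fin n} (hxy : (x : ℕ) + 1 = y ∨ (y : ℕ) + 1 = x)
    (h : ¬(u = x ∧ v = y)) (h' : ¬(u = y ∧ v = x)) :
    swap x y u < swap x y v ↔ u < v := by
  simp only [swap_apply_def]
  simp only [Fin.ext_iff] at h h'
  split_ifs <;> simp only [Fin.lt_def, Fin.ext_iff] at * <;> omega

lemma descents_swap_mul {x y : Fin (m + 1)} (hxy : (x : ℕ) + 1 = y ∨ (y : ℕ) + 1 = x)
    (π : Perm (Fin (m + 1)))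
    (hπ : ∀ i : Fin m, ¬(π i.castSucc = x ∧ π i.succ = y) ∧ ¬(π i.castSucc = y ∧ π i.succ = x)) :
    descents (m + 1) (swap x y * π) = descents (m + 1) π := by
  rw [descents_succ, descents_succ]
  congr 1
  refine filter_congr fun i _ => ?_
  rw [Perm.mul_apply, Perm.mul_apply,
    swap_lt_swap_iff hxy (fun h => (hπ i).2 h.symm) (fun h => (hπ i).1 h.symm)]

lemma card_first_not_second_comm (d : ℤ) {x y : Fin (m + 2)}
    (hxy : (x : ℕ) + 1 = y ∨ (y : ℕ) + 1 = x) :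
    #{π : Perm (Fin (m + 2)) | ((descents (m + 2) π : ℤ) = d ∧ π 0 = x) ∧ π 1 ≠ y} =
      #{π : Perm (Fin (m + 2)) | ((descents (m + 2) π : ℤ) = d ∧ π 0 = y) ∧ π 1 ≠ x} := by
  have maps_to {x y : Fin (m + 2)} (hxy : (x : ℕ) + 1 = y ∨ (y : ℕ) + 1 = x)
      (π : Perm (Fin (m + 2))) (hπ : ((descents (m + 2) π : ℤ) = d ∧ π 0 = x) ∧ π 1 ≠ y) :
      ((descents (m + 2) (swap x y * π) : ℤ) = d ∧ (swap x y * π) 0 = y) ∧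
        (swap x y * π) 1 ≠ x := by
    obtain ⟨⟨hd, h0⟩, h1⟩ := hπ
    have not_adjacent (i : Fin (m + 1)) :
        ¬(π i.castSucc = x ∧ π i.succ = y) ∧ ¬(π i.castSucc = y ∧ π i.succ = x) := by
      refine ⟨fun ⟨hx, hy⟩ => h1 ?_,
        fun ⟨_, hx⟩ => Fin.succ_ne_zero i (π.injective (hx.trans h0.symm))⟩
      rwa [show i = 0 from Fin.castSucc_injective _ (π.injective (hx.trans h0.symm))] at hy
    refine ⟨⟨by rwa [descents_swap_mul hxy π not_adjacent], by simp [h0]⟩, ?_⟩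
    simpa [swap_apply_eq_iff] using h1
  refine card_bij' (fun π _ => swap x y * π) (fun π _ => swap x y * π) (fun π hπ => ?_)
    (fun π hπ => ?_) (fun π _ => swap_mul_self_mul x y π) (fun π _ => swap_mul_self_mul x y π)
  · simp only [mem_filter, mem_univ, true_and] at hπ ⊢
    exact maps_to hxy π hπ
  · simp only [mem_filter, mem_univ, true_and] at hπ ⊢
    rw [swap_comm]
    exact maps_to hxy.symm π hπ

end Descents

open Descents in
theorem stmt4 (n : ℕ) (hn : 1 < n) (d : ℤ) (k : ℕ) (hk1 : 1 ≤ k) (hkn : k ≤ n - 1) :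
    (A n d k : ℤ) - A (n - 1) d k = (A n d (k + 1) : ℤ) - A (n - 1) (d - 1) k := by
  obtain ⟨m, rfl⟩ : ∃ m, n = m + 2 := ⟨n - 2, by omega⟩
  obtain ⟨a, rfl⟩ : ∃ a : Fin (m + 1), k = a + 1 :=
    ⟨⟨k - 1, by omega⟩, (Nat.sub_add_cancel hk1).symm⟩
  have split_low := A_succ_val_succ_eq_card_add_card d a.castSucc a.succ
  have split_high := A_succ_val_succ_eq_card_add_card d a.succ a.castSucc
  have ascent := card_first_two_eq_A d a.castSucc a
  have descent := card_first_two_eq_A d a.succ a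
  rw [Fin.succAbove_castSucc_self, if_neg Fin.castSucc_lt_succ.not_gt, sub_zero] at ascent
  rw [Fin.succAbove_succ_self, if_pos Fin.castSucc_lt_succ] at descent
  have swap_rest := card_first_not_second_comm d (x := a.castSucc) (y := a.succ) (Or.inl rfl)
  rw [Fin.val_castSucc] at split_low
  rw [Fin.val_succ] at split_high
  rw [show m + 2 - 1 = m + 1 from rfl]
  omega
end

section
/- For n > 1 and 1 ≤ k ≤ n-1, A(n,d,k) = (n-d-1)·A(n-1,d-1,k) + (d+1)·A(n-1,d,k). -/
open Finset

/-!
Deleting the largest letter `n` from `π` (which is not in front, as `π 1 = k < n`) leaves a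
permutation `σ` of `{1, …, n-1}` with `σ 1 = k`, and `π` is recovered by inserting `n` into one of
the `n - 1` slots behind a letter of `σ`. Inserting it into a descent of `σ` or at the end keeps the
number of descents, inserting it into an ascent adds one. If `σ` has `e` descents there are `e + 1`
slots of the first kind and `n - 2 - e` of the second, so each `σ` with `e = d` yields `d + 1`
permutations `π` and each `σ` with `e = d - 1` yields `n - d - 1`.
-/

-- descents of the word `w 0, w 1, …, w N`
def wordDescents (w : ℕ → ℕ) (N : ℕ) : ℕ := #{i ∈ range N | w (i + 1) < w i}

def wordAscents (w : ℕ → ℕ) (N : ℕ) : ℕ := #{i ∈ range N | w i < w (i + 1)}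

def wordInsert (w : ℕ → ℕ) (q a : ℕ) (i : ℕ) : ℕ :=
  if i < q then w i else if i = q then a else w (i - 1)

section Words

variable {w v : ℕ → ℕ} {N : ℕ}

lemma wordDescents_succ :
    wordDescents w (N + 1) = wordDescents w N + if w (N + 1) < w N then 1 else 0 := by
  simp only [wordDescents, card_filter, sum_range_succ]

lemma wordDescents_congr (h : ∀ i ≤ N, w i = v i) : wordDescents w N = wordDescents v N := by
  unfold wordDescents
  congr 1
  refine filter_congr fun i hi => ?_
  have hi : i < N := mem_range.mp hi
  rw [h i hi.le, h (i + 1) hi]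

lemma wordDescents_add_wordAscents (hw : ∀ i < N, w i ≠ w (i + 1)) :
    wordDescents w N + wordAscents w N = N := by
  have hasc : wordAscents w N = #{i ∈ range N | ¬ w (i + 1) < w i} := by
    unfold wordAscents
    congr 1
    refine filter_congr fun i hi => ?_
    have := hw i (mem_range.mp hi)
    omega
  rw [hasc, wordDescents, card_filter_add_card_filter_not, card_range]

lemma wordDescents_wordInsert {M p : ℕ} (hp : p ≤ N) (hM : ∀ i, w i < M)
    (hw : ∀ i < N, w i ≠ w (i + 1)) :
    wordDescents (wordInsert w (p + 1) M) (N + 1)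
      = wordDescents w N + if p < N ∧ w p < w (p + 1) then 1 else 0 := by
  induction N, hp using Nat.le_induction with
  | base =>
    have hbelow : ∀ i ≤ p, wordInsert w (p + 1) M i = w i := fun i hi => if_pos (by omega)
    have hlast : wordInsert w (p + 1) M (p + 1) = M := by simp [wordInsert]
    rw [wordDescents_succ, wordDescents_congr hbelow, hlast, hbelow p le_rfl,
      if_neg (hM p).not_gt, if_neg (by omega)]
  | succ N hpN ih =>
    rw [wordDescents_succ, ih fun i hi => hw i (by omega), wordDescents_succ]
    have hnext : wordInsert w (p + 1) M (N + 1 + 1) = w (N + 1) := by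
      simp only [wordInsert]; rw [if_neg (by omega), if_neg (by omega)]; rfl
    rw [hnext]
    rcases hpN.lt_or_eq with hpN | rfl
    · have hprev : wordInsert w (p + 1) M (N + 1) = w N := by
        simp only [wordInsert]; rw [if_neg (by omega), if_neg (by omega)]; rfl
      rw [hprev]
      split_ifs <;> omega
    · have hprev : wordInsert w (p + 1) M (p + 1) = M := by simp [wordInsert]
      have := hw p (by omega)
      rw [hprev, if_pos (hM _), if_neg (by omega)]
      split_ifs <;> omega

end Words

open Equiv

section OneLine

variable {n : ℕ}

def oneLine (π : Perm (Fin n)) (i : ℕ) : ℕ := if h : i < n then π ⟨i, h⟩ else 0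

lemma oneLine_of_lt (π : Perm (Fin n)) {i : ℕ} (h : i < n) : oneLine π i = π ⟨i, h⟩ := dif_pos h

lemma oneLine_of_le (π : Perm (Fin n)) {i : ℕ} (h : n ≤ i) : oneLine π i = 0 := dif_neg (by omega)

lemma oneLine_lt (π : Perm (Fin (n + 1))) (i : ℕ) : oneLine π i < n + 1 := by
  unfold oneLine; split_ifs
  exacts [Fin.is_lt _, n.succ_pos]

lemma oneLine_ne_oneLine_succ (π : Perm (Fin n)) {i : ℕ} (hi : i + 1 < n) :
    oneLine π i ≠ oneLine π (i + 1) := by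
  rw [oneLine_of_lt π (by omega), oneLine_of_lt π hi, ne_eq, Fin.val_inj, π.apply_eq_iff_eq]
  simp

lemma descents_eq_wordDescents (π : Perm (Fin n)) :
    descents n π = wordDescents (oneLine π) (n - 1) := by
  unfold descents wordDescents
  refine card_bij (fun i _ => i.val) ?_ (fun _ _ _ _ => Fin.ext) ?_
  · intro i hi
    simp only [mem_filter, mem_univ, true_and, mem_range] at hi ⊢
    obtain ⟨j, hj, hlt⟩ := hi
    have hjn := j.isLt
    refine ⟨by omega, ?_⟩
    rwa [oneLine_of_lt π i.isLt, oneLine_of_lt π (by omega), show ⟨i + 1, _⟩ = j from Fin.ext hj.symm]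
  · intro i hi
    simp only [mem_filter, mem_range] at hi
    refine ⟨⟨i, by omega⟩, ?_, rfl⟩
    rw [oneLine_of_lt π (by omega), oneLine_of_lt π (by omega)] at hi
    simpa only [mem_filter, mem_univ, true_and] using ⟨⟨i + 1, by omega⟩, rfl, hi.2⟩

lemma descents_add_wordAscents (π : Perm (Fin (n + 1))) :
    descents (n + 1) π + wordAscents (oneLine π) n = n := by
  rw [descents_eq_wordDescents, Nat.add_sub_cancel]
  exact wordDescents_add_wordAscents fun i hi => oneLine_ne_oneLine_succ π (by omega)

end OneLine

section InsertMax

variable {n : ℕ}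

lemma Fin.insertNth_injective {α : Type*} {q : Fin (n + 1)} {x : α} {f : Fin n → α}
    (hf : Function.Injective f) (hx : ∀ j, f j ≠ x) :
    Function.Injective (Fin.insertNth (α := fun _ => α) q x f) := by
  intro a b h
  rcases q.eq_self_or_eq_succAbove a with ha | ⟨i, rfl⟩ <;>
    rcases q.eq_self_or_eq_succAbove b with hb | ⟨j, rfl⟩
  · exact ha.trans hb.symm
  · subst ha
    simp only [Fin.insertNth_apply_same, Fin.insertNth_apply_succAbove] at h
    exact absurd h.symm (hx j)
  · subst hb
    simp only [Fin.insertNth_apply_same, Fin.insertNth_apply_succAbove] at h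
    exact absurd h (hx i)
  · simp only [Fin.insertNth_apply_succAbove] at h
    rw [hf h]

noncomputable def insertMax (q : Fin (n + 1)) (σ : Perm (Fin n)) : Perm (Fin (n + 1)) :=
  Equiv.ofBijective (Fin.insertNth q (Fin.last n) (Fin.castSucc ∘ σ)) <|
    Finite.injective_iff_bijective.mp <|
      Fin.insertNth_injective (Fin.castSucc_injective n |>.comp σ.injective)
        fun j => Fin.castSucc_ne_last (σ j)

@[simp]
lemma insertMax_apply_self (q : Fin (n + 1)) (σ : Perm (Fin n)) : insertMax q σ q = Fin.last n :=
  Fin.insertNth_apply_same (α := fun _ => Fin (n + 1)) _ _ _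

@[simp]
lemma insertMax_apply_succAbove (q : Fin (n + 1)) (σ : Perm (Fin n)) (j : Fin n) :
    insertMax q σ (q.succAbove j) = (σ j).castSucc :=
  Fin.insertNth_apply_succAbove (α := fun _ => Fin (n + 1)) _ _ _ _

@[simp]
lemma insertMax_symm_last (q : Fin (n + 1)) (σ : Perm (Fin n)) :
    (insertMax q σ).symm (Fin.last n) = q := by
  rw [Equiv.symm_apply_eq, insertMax_apply_self]

lemma apply_succAbove_symm_last_ne_last (π : Perm (Fin (n + 1))) (j : Fin n) :
    π ((π.symm (Fin.last n)).succAbove j) ≠ Fin.last n := by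
  rw [ne_eq, ← Equiv.eq_symm_apply]
  exact Fin.succAbove_ne _ _

noncomputable def removeMax (π : Perm (Fin (n + 1))) : Perm (Fin n) :=
  Equiv.ofBijective (fun j => (π ((π.symm (Fin.last n)).succAbove j)).castPred
      (apply_succAbove_symm_last_ne_last π j)) <|
    Finite.injective_iff_bijective.mp fun _ _ h =>
      Fin.succAbove_right_injective (π.injective (Fin.castPred_inj.mp h))

@[simp]
lemma removeMax_insertMax (q : Fin (n + 1)) (σ : Perm (Fin n)) : removeMax (insertMax q σ) = σ := by
  ext j
  simp [removeMax]

lemma insertMax_removeMax (π : Perm (Fin (n + 1))) :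
    insertMax (π.symm (Fin.last n)) (removeMax π) = π := by
  ext i : 1
  rcases (π.symm (Fin.last n)).eq_self_or_eq_succAbove i with rfl | ⟨j, rfl⟩
  · simp
  · simp [removeMax]

noncomputable def insertMaxEquiv : Fin (n + 1) × Perm (Fin n) ≃ Perm (Fin (n + 1)) where
  toFun x := insertMax x.1 x.2
  invFun π := (π.symm (Fin.last n), removeMax π)
  left_inv x := by simp
  right_inv := insertMax_removeMax

@[simp]
lemma insertMaxEquiv_apply (x : Fin (n + 1) × Perm (Fin n)) : insertMaxEquiv x = insertMax x.1 x.2 :=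
  rfl

lemma insertMax_apply_zero [NeZero n] {q : Fin (n + 1)} (hq : q ≠ 0) (σ : Perm (Fin n)) :
    insertMax q σ 0 = (σ 0).castSucc := by
  rw [← Fin.succAbove_ne_zero_zero hq, insertMax_apply_succAbove]

lemma oneLine_insertMax (q : Fin (n + 1)) (σ : Perm (Fin n)) :
    oneLine (insertMax q σ) = wordInsert (oneLine σ) q n := by
  have hq := q.is_le
  funext i
  unfold wordInsert
  split_ifs with hlt heq
  · have hpos : (⟨i, by omega⟩ : Fin (n + 1)) = q.succAbove ⟨i, by omega⟩ :=
      (Fin.succAbove_of_castSucc_lt q ⟨i, by omega⟩ (Fin.lt_def.mpr hlt)).symm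
    rw [oneLine_of_lt _ (by omega), hpos, insertMax_apply_succAbove, Fin.val_castSucc,
      oneLine_of_lt]
  · rw [oneLine_of_lt _ (by omega), show (⟨i, _⟩ : Fin (n + 1)) = q from Fin.ext heq,
      insertMax_apply_self, Fin.val_last]
  · rcases lt_or_ge i (n + 1) with hi | hi
    · have hpos : (⟨i, hi⟩ : Fin (n + 1)) = q.succAbove ⟨i - 1, by omega⟩ := by
        rw [Fin.succAbove_of_le_castSucc _ _ (Fin.le_def.mpr (by simp; omega))]
        ext; simp; omega
      rw [oneLine_of_lt _ hi, hpos, insertMax_apply_succAbove, Fin.val_castSucc, oneLine_of_lt]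
    · rw [oneLine_of_le _ hi, oneLine_of_le _ (by omega)]

lemma descents_insertMax_succ (p : Fin (n + 1)) (σ : Perm (Fin (n + 1))) :
    descents (n + 2) (insertMax p.succ σ)
      = descents (n + 1) σ + if (p : ℕ) < n ∧ oneLine σ p < oneLine σ (p + 1) then 1 else 0 := by
  rw [descents_eq_wordDescents, descents_eq_wordDescents, oneLine_insertMax, Fin.val_succ]
  exact wordDescents_wordInsert (Nat.lt_succ_iff.mp p.isLt) (oneLine_lt σ)
    fun i hi => oneLine_ne_oneLine_succ σ (by omega)

end InsertMax

section Counting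

variable {n : ℕ}

lemma card_filter_ascent (σ : Perm (Fin (n + 1))) :
    #{p ∈ range (n + 1) | p < n ∧ oneLine σ p < oneLine σ (p + 1)} = n - descents (n + 1) σ := by
  have hrange : {p ∈ range (n + 1) | p < n ∧ oneLine σ p < oneLine σ (p + 1)}
      = {p ∈ range n | oneLine σ p < oneLine σ (p + 1)} := by
    ext p; simp only [mem_filter, mem_range]; omega
  have := descents_add_wordAscents σ
  rw [hrange, ← wordAscents]
  omega

lemma card_filter_descents_insertMax_succ (σ : Perm (Fin (n + 1))) (d : ℤ) :
    (#{p : Fin (n + 1) | (descents (n + 2) (insertMax p.succ σ) : ℤ) = d} : ℤ)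
      = (if (descents (n + 1) σ : ℤ) = d then d + 1 else 0)
        + if (descents (n + 1) σ : ℤ) = d - 1 then n + 1 - d else 0 := by
  set D := descents (n + 1) σ
  set IsAscent : ℕ → Prop := fun p => p < n ∧ oneLine σ p < oneLine σ (p + 1)
  have hasc : #{p ∈ range (n + 1) | IsAscent p} = n - D := card_filter_ascent σ
  have hD : D ≤ n := by have := descents_add_wordAscents σ; omega
  have hnot : #{p ∈ range (n + 1) | ¬ IsAscent p} = D + 1 := by
    have := card_filter_add_card_filter_not (s := range (n + 1)) (p := fun p => IsAscent p)
    rw [card_range] at this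
    omega
  have hcount : #{p : Fin (n + 1) | (descents (n + 2) (insertMax p.succ σ) : ℤ) = d}
      = ∑ p ∈ range (n + 1), if IsAscent p then (if (D : ℤ) + 1 = d then 1 else 0)
          else (if (D : ℤ) = d then 1 else 0) := by
    rw [card_filter, ← Fin.sum_univ_eq_sum_range]
    refine sum_congr rfl fun p _ => ?_
    rw [descents_insertMax_succ]
    by_cases h : IsAscent p <;> simp [IsAscent, h, D]
  rw [hcount, sum_ite, sum_const, sum_const, hasc, hnot, smul_eq_mul, smul_eq_mul]
  push_cast [hD]
  split_ifs <;> omega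

end Counting

lemma A_succ_eq_card (n : ℕ) (d : ℤ) (k : ℕ) :
    A (n + 1) d k = #{π : Perm (Fin (n + 1)) | (descents (n + 1) π : ℤ) = d ∧ (π 0 : ℕ) + 1 = k} := by
  unfold A
  congr 1
  refine filter_congr fun π _ => and_congr_right fun _ => ?_
  exact ⟨fun ⟨i, hi, h⟩ => (Fin.ext hi : i = 0) ▸ h, fun h => ⟨0, rfl, h⟩⟩

lemma A_add_two_eq_sum {n k : ℕ} (hk : k ≤ n + 1) (d : ℤ) :
    A (n + 2) d k = ∑ σ : Perm (Fin (n + 1)), if (σ 0 : ℕ) + 1 = k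
      then #{p : Fin (n + 1) | (descents (n + 2) (insertMax p.succ σ) : ℤ) = d} else 0 := by
  rw [A_succ_eq_card, card_filter, ← insertMaxEquiv.sum_comp, Fintype.sum_prod_type,
    Fin.sum_univ_succ, sum_comm]
  have hfirst (σ : Perm (Fin (n + 1))) : ((insertMax 0 σ 0 : Fin (n + 2)) : ℕ) + 1 ≠ k := by
    rw [insertMax_apply_self, Fin.val_last]
    omega
  have hsucc (p : Fin (n + 1)) (σ : Perm (Fin (n + 1))) :
      ((insertMax p.succ σ 0 : Fin (n + 2)) : ℕ) = σ 0 := by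
    rw [insertMax_apply_zero (Fin.succ_ne_zero p), Fin.val_castSucc]
  simp only [insertMaxEquiv_apply, hfirst, hsucc, and_false, if_false, sum_const_zero, zero_add]
  refine sum_congr rfl fun σ _ => ?_
  split_ifs with h
  · simp only [h, and_true, card_filter]
  · simp only [h, and_false, if_false, sum_const_zero]

theorem stmt5_general (n : ℕ) (hn : 1 < n) (d : ℤ) (k : ℕ) (hkn : k ≤ n - 1) :
    (A n d k : ℤ) = ((n : ℤ) - d - 1) * A (n - 1) (d - 1) k + (d + 1) * A (n - 1) d k := by
  obtain ⟨m, rfl⟩ : ∃ m, n = m + 2 := ⟨n - 2, by omega⟩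
  rw [show m + 2 - 1 = m + 1 from rfl] at hkn ⊢
  rw [A_add_two_eq_sum hkn, A_succ_eq_card, A_succ_eq_card, card_filter, card_filter]
  push_cast
  simp_rw [card_filter_descents_insertMax_succ, mul_sum, ← sum_add_distrib]
  refine sum_congr rfl fun σ _ => ?_
  split_ifs <;> simp only [mul_one, mul_zero, add_zero, zero_add] <;> omega

theorem stmt5 (n : ℕ) (hn : 1 < n) (d : ℤ) (k : ℕ) (hk1 : 1 ≤ k) (hkn : k ≤ n - 1) :
    (A n d k : ℤ) = ((n : ℤ) - d - 1) * A (n - 1) (d - 1) k + (d + 1) * A (n - 1) d k :=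
  stmt5_general n hn d k hkn
end

section
/- For fixed n ≥ 1 and 1 ≤ k ≤ n, the polynomial identity Σ_d A(n,d,k) x^d = (1-x)^n Σ_{j≥0} j^{k-1}(j+1)^{n-k} x^j holds as an identity of formal power series (with 0^0 = 1). -/
open Finset

/-!
Let `n = m + 1` and let the first value be `a + 1`. For `j : ℕ`, the functions `f : Fin n → ℕ`
with `f a = j`, `f v < j` for `v < a` and `f v ≤ j` for `v > a` number `j ^ a * (j + 1) ^ (m - a)`.
Sort the positions of such an `f` by decreasing value, ties by increasing position: this is a
permutation `π` with `π 0 = a`, and `g = f ∘ π` is weakly decreasing, strictly at every descent of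
`π`, with `g 0 = j`; conversely `f = g ∘ π⁻¹` recovers `f` from any such pair `(π, g)`. For fixed
`π` with `d` descents the generating function of these `g` by `g 0` is `X ^ d / (1 - X) ^ n`, and
summing over `π` gives `∑ d, A n d (a + 1) X ^ d / (1 - X) ^ n`.
-/

open PowerSeries

theorem Tuple.eq_sort_iff_strictMono {n : ℕ} {α : Type*} [LinearOrder α] {f : Fin n → α}
    (hf : Function.Injective f) {σ : Equiv.Perm (Fin n)} :
    σ = Tuple.sort f ↔ StrictMono (f ∘ σ) := by
  refine ⟨?_, fun h => Equiv.ext fun i => hf ?_⟩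
  · rintro rfl
    exact (Tuple.monotone_sort f).strictMono_of_injective (hf.comp (Tuple.sort f).injective)
  · exact congrFun (Tuple.unique_monotone h.monotone (Tuple.monotone_sort f)) i

namespace FirstLetterEulerian

variable {m : ℕ}

def dropSet (e : Fin m → ℕ) (j : ℕ) : Finset (Fin (m + 1) → ℕ) :=
  {g ∈ Fintype.piFinset fun _ => range (j + 1) | g 0 = j ∧ ∀ i, g i.succ + e i ≤ g i.castSucc}

theorem mem_dropSet {e : Fin m → ℕ} {j : ℕ} {g : Fin (m + 1) → ℕ} :
    g ∈ dropSet e j ↔ g 0 = j ∧ ∀ i, g i.succ + e i ≤ g i.castSucc := by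
  refine mem_filter.trans (and_iff_right_of_imp fun ⟨hg0, hg⟩ => ?_)
  have hanti : Antitone g := Fin.antitone_iff_succ_le.2 fun i => (Nat.le_add_right _ _).trans (hg i)
  exact Fintype.mem_piFinset.2 fun v => mem_range_succ_iff.2 (hg0 ▸ hanti (Fin.zero_le v))

theorem card_dropSet_cons (e₀ : ℕ) (e : Fin m → ℕ) (j : ℕ) :
    #(dropSet (Fin.cons e₀ e : Fin (m + 1) → ℕ) j) = ∑ q ∈ range (j + 1 - e₀), #(dropSet e q) := by
  rw [← card_sigma]
  refine card_nbij' (fun g => ⟨g 1, Fin.tail g⟩) (fun p => Fin.cons j p.2) ?_ ?_ ?_ ?_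
  · intro g hg
    obtain ⟨hg0, hg⟩ := mem_dropSet.1 hg
    simp only [coe_sigma, Set.mem_sigma_iff, mem_coe, mem_range, mem_dropSet]
    have h0 := hg 0
    simp only [Fin.cons_zero, Fin.succ_zero_eq_one, Fin.castSucc_zero, hg0] at h0
    refine ⟨by omega, rfl, fun i => ?_⟩
    simpa [Fin.tail] using hg i.succ
  · rintro ⟨q, g⟩ hg
    simp only [coe_sigma, Set.mem_sigma_iff, mem_coe, mem_range, mem_dropSet] at hg
    obtain ⟨hq, hg0, hg⟩ := hg
    refine mem_dropSet.2 ⟨rfl, Fin.cases ?_ fun i => ?_⟩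
    · simp [hg0]; omega
    · simpa using hg i
  · intro g hg
    simp only [← (mem_dropSet.1 hg).1, Fin.cons_self_tail]
  · rintro ⟨q, g⟩ hg
    simp only [coe_sigma, Set.mem_sigma_iff, mem_coe, mem_dropSet] at hg
    simp [hg.2.1]

theorem coeff_X_pow_mul_mul_mk_one {R : Type*} [CommSemiring R] (G : R⟦X⟧) (a j : ℕ) :
    coeff j (X ^ a * (G * PowerSeries.mk 1)) = ∑ q ∈ range (j + 1 - a), coeff q G := by
  rw [coeff_X_pow_mul']
  split_ifs with ha
  · rw [coeff_mul, Nat.sum_antidiagonal_eq_sum_range_succ_mk, show j + 1 - a = j - a + 1 by omega]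
    simp
  · rw [show j + 1 - a = 0 by omega, range_zero, sum_empty]

theorem mk_card_dropSet {R : Type*} [CommSemiring R] (e : Fin m → ℕ) :
    PowerSeries.mk (fun j => (#(dropSet e j) : R)) =
      X ^ (∑ i, e i) * (PowerSeries.mk 1) ^ (m + 1) := by
  induction m with
  | zero =>
    ext j
    have : dropSet e j = {fun _ => j} := by
      ext g
      simp [mem_dropSet, funext_iff, Fin.forall_fin_one]
    simp [this]
  | succ m ih =>
    ext j
    rw [← Fin.cons_self_tail e, Fin.sum_cons, pow_add, pow_succ, mul_assoc,
      ← mul_assoc _ (PowerSeries.mk 1 ^ _), ← ih, coeff_X_pow_mul_mul_mk_one, coeff_mk,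
      card_dropSet_cons]
    simp

def descentIndicator (π : Equiv.Perm (Fin (m + 1))) (i : Fin m) : ℕ :=
  if π i.succ < π i.castSucc then 1 else 0

theorem descents_eq_sum_descentIndicator (π : Equiv.Perm (Fin (m + 1))) :
    descents (m + 1) π = ∑ i, descentIndicator π i := by
  rw [descents, card_filter, Fin.sum_univ_castSucc]
  have hlast : ¬∃ j : Fin (m + 1), (j : ℕ) = m + 1 ∧ π j < π (Fin.last m) :=
    fun ⟨j, hj, _⟩ => by omega
  have hsucc (i : Fin m) : (∃ j : Fin (m + 1), (j : ℕ) = i + 1 ∧ π j < π i.castSucc) ↔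
      π i.succ < π i.castSucc :=
    ⟨fun ⟨j, hj, h⟩ => by rwa [show j = i.succ from Fin.ext (by simp [hj])] at h,
      fun h => ⟨i.succ, by simp, h⟩⟩
  simp only [descentIndicator, Fin.val_castSucc, Fin.val_last, hlast, hsucc, if_false, add_zero]

theorem A_succ_eq_card (d : ℕ) (a : Fin (m + 1)) :
    A (m + 1) d (a + 1) = #{π : Equiv.Perm (Fin (m + 1)) | descents (m + 1) π = d ∧ π 0 = a} := by
  refine congrArg card <| filter_congr fun π _ =>
    and_congr Nat.cast_inj ⟨?_, fun h => ⟨0, rfl, by simp [h]⟩⟩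
  rintro ⟨i, hi, hπi⟩
  rw [show i = 0 from Fin.ext hi] at hπi
  exact Fin.ext (by omega)

theorem descents_le (π : Equiv.Perm (Fin (m + 1))) : descents (m + 1) π ≤ m := by
  rw [descents_eq_sum_descentIndicator]
  calc ∑ i, descentIndicator π i ≤ ∑ _i : Fin m, 1 := sum_le_sum fun i _ => by
        unfold descentIndicator; split_ifs <;> simp
    _ = m := by simp

theorem sum_X_pow_descents {R : Type*} [CommSemiring R] (a : Fin (m + 1)) :
    ∑ π ∈ {π : Equiv.Perm (Fin (m + 1)) | π 0 = a}, (X : R⟦X⟧) ^ descents (m + 1) π =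
      ∑ d ∈ range (m + 1), C (A (m + 1) d (a + 1) : R) * X ^ d := by
  rw [← sum_fiberwise_of_maps_to (g := descents (m + 1)) (t := range (m + 1))
    fun π _ => mem_range_succ_iff.2 (descents_le π)]
  refine sum_congr rfl fun d _ => ?_
  rw [sum_congr rfl fun π hπ => by rw [(mem_filter.1 hπ).2], sum_const, A_succ_eq_card,
    filter_filter, nsmul_eq_mul, map_natCast]
  simp_rw [and_comm]

section Labellings

variable {n : ℕ} {α : Type*}

def sortKey (f : Fin n → α) (v : Fin n) : αᵒᵈ ×ₗ Fin n := toLex (OrderDual.toDual (f v), v)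

theorem sortKey_injective (f : Fin n → α) : Function.Injective (sortKey f) :=
  fun _ _ h => (Prod.ext_iff.1 (toLex.injective h)).2

theorem sortKey_lt_sortKey [LinearOrder α] {f : Fin n → α} {u w : Fin n} :
    sortKey f u < sortKey f w ↔ f w < f u ∨ f w = f u ∧ u < w := by
  simp [sortKey, Prod.Lex.toLex_lt_toLex, eq_comm]

theorem sortKey_le_sortKey [LinearOrder α] {f : Fin n → α} {u w : Fin n} :
    sortKey f u ≤ sortKey f w ↔ f w < f u ∨ f w = f u ∧ u ≤ w := by
  simp [sortKey, Prod.Lex.toLex_le_toLex, eq_comm]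

theorem eq_sort_sortKey_iff {f : Fin (m + 1) → ℕ} {π : Equiv.Perm (Fin (m + 1))} :
    π = Tuple.sort (sortKey f) ↔ ∀ i, f (π i.succ) + descentIndicator π i ≤ f (π i.castSucc) := by
  rw [Tuple.eq_sort_iff_strictMono (sortKey_injective f), Fin.strictMono_iff_lt_succ]
  refine forall_congr' fun i => ?_
  have hne : π i.castSucc ≠ π i.succ := π.injective.ne (Fin.castSucc_lt_succ (i := i)).ne
  simp only [Function.comp_apply, sortKey_lt_sortKey, descentIndicator]
  split_ifs with h
  · simp [h.not_gt]
  · simp [lt_of_le_of_ne (not_lt.1 h) hne]; omega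

def leaderSet (a : Fin n) (j : ℕ) : Finset (Fin n → ℕ) :=
  Fintype.piFinset fun v => if v < a then range j else if v = a then {j} else range (j + 1)

theorem card_leaderSet (a : Fin n) (j : ℕ) :
    #(leaderSet a j) = j ^ (a : ℕ) * (j + 1) ^ (n - 1 - a) := by
  have hcard (v : Fin n) : #(if v < a then range j else if v = a then {j} else range (j + 1)) =
      (if v < a then j else 1) * (if a < v then j + 1 else 1) := by
    rcases lt_trichotomy v a with h | rfl | h
    · simp [h, h.not_gt]
    · simp
    · simp [h, h.not_gt, h.ne']
  rw [leaderSet, Fintype.card_piFinset, prod_congr rfl fun v _ => hcard v, prod_mul_distrib,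
    ← prod_filter, ← prod_filter, prod_const, prod_const, filter_gt_eq_Iio, filter_lt_eq_Ioi,
    Fin.card_Iio, Fin.card_Ioi]

theorem mem_leaderSet {a : Fin n} {j : ℕ} {f : Fin n → ℕ} :
    f ∈ leaderSet a j ↔ f a = j ∧ ∀ v, sortKey f a ≤ sortKey f v := by
  simp only [leaderSet, Fintype.mem_piFinset, sortKey_le_sortKey]
  constructor
  · intro h
    have ha : f a = j := by simpa using h a
    refine ⟨ha, fun v => ?_⟩
    have hv := h v
    rcases lt_trichotomy v a with hva | rfl | hva
    · simp [hva] at hv; omega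
    · simp
    · simp [hva.not_gt, hva.ne'] at hv; omega
  · rintro ⟨ha, h⟩ v
    have hv := h v
    rcases lt_trichotomy v a with hva | rfl | hva
    · simp [hva, hva.not_ge] at hv ⊢; omega
    · simpa using ha
    · simp [hva.not_gt, hva.ne'] at hv ⊢; omega

end Labellings

theorem sortKey_sort_zero_le (f : Fin (m + 1) → ℕ) (v : Fin (m + 1)) :
    sortKey f (Tuple.sort (sortKey f) 0) ≤ sortKey f v := by
  simpa using Tuple.monotone_sort (sortKey f) (Fin.zero_le ((Tuple.sort (sortKey f)).symm v))

theorem sort_sortKey_eq_and_mem_leaderSet_iff {a : Fin (m + 1)} {j : ℕ} {f : Fin (m + 1) → ℕ}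
    {π : Equiv.Perm (Fin (m + 1))} :
    Tuple.sort (sortKey f) = π ∧ f ∈ leaderSet a j ↔
      π 0 = a ∧ f ∘ π ∈ dropSet (descentIndicator π) j := by
  rw [eq_comm, eq_sort_sortKey_iff, mem_leaderSet, mem_dropSet]
  constructor
  · rintro ⟨hdrop, hfa, hmin⟩
    have hπ := eq_sort_sortKey_iff.2 hdrop
    have h0 : π 0 = a := sortKey_injective f <| le_antisymm (hπ ▸ sortKey_sort_zero_le f a) (hmin _)
    exact ⟨h0, by simp [h0, hfa], hdrop⟩
  · rintro ⟨h0, hf0, hdrop⟩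
    have hπ := eq_sort_sortKey_iff.2 hdrop
    refine ⟨hdrop, by simpa [h0] using hf0, fun v => ?_⟩
    simpa [h0, ← hπ] using sortKey_sort_zero_le f v

theorem card_leaderSet_eq_sum (a : Fin (m + 1)) (j : ℕ) :
    #(leaderSet a j) = ∑ π ∈ {π | π 0 = a}, #(dropSet (descentIndicator π) j) := by
  rw [card_eq_sum_card_fiberwise fun f _ => mem_univ (Tuple.sort (sortKey f)), sum_filter]
  refine sum_congr rfl fun π _ => ?_
  calc #{f ∈ leaderSet a j | Tuple.sort (sortKey f) = π}
      = #{g ∈ dropSet (descentIndicator π) j | π 0 = a} := by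
        refine card_nbij' (· ∘ π) (· ∘ π.symm) (fun f hf => ?_) (fun g hg => ?_) (fun f _ => ?_)
          (fun g _ => ?_)
        · simp only [mem_coe, mem_filter] at hf ⊢
          exact (sort_sortKey_eq_and_mem_leaderSet_iff.1 hf.symm).symm
        · simp only [mem_coe, mem_filter] at hg ⊢
          refine (sort_sortKey_eq_and_mem_leaderSet_iff.2 ⟨hg.2, ?_⟩).symm
          simpa [Function.comp_assoc] using hg.1
        · simp [Function.comp_assoc]
        · simp [Function.comp_assoc]
    _ = if π 0 = a then #(dropSet (descentIndicator π) j) else 0 := by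
        rw [filter_const]; split_ifs <;> simp

theorem mk_card_leaderSet {R : Type*} [CommSemiring R] (a : Fin (m + 1)) :
    PowerSeries.mk (fun j => (#(leaderSet a j) : R)) =
      (∑ π ∈ {π : Equiv.Perm (Fin (m + 1)) | π 0 = a}, X ^ descents (m + 1) π) *
        (PowerSeries.mk 1) ^ (m + 1) := by
  calc PowerSeries.mk (fun j => (#(leaderSet a j) : R))
      = ∑ π ∈ {π : Equiv.Perm (Fin (m + 1)) | π 0 = a},
          PowerSeries.mk fun j => (#(dropSet (descentIndicator π) j) : R) := by
        ext j
        simp [card_leaderSet_eq_sum]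
    _ = _ := by
        simp_rw [mk_card_dropSet, descents_eq_sum_descentIndicator, sum_mul]

end FirstLetterEulerian

open FirstLetterEulerian in
theorem stmt11 (n : ℕ) (hn : 1 ≤ n) (k : ℕ) (hk1 : 1 ≤ k) (hkn : k ≤ n) :
    (∑ d ∈ Finset.range n, PowerSeries.C (R := ℤ) (A n (d : ℤ) k : ℤ) * PowerSeries.X ^ d)
      = (1 - PowerSeries.X) ^ n *
        PowerSeries.mk (fun j => (j : ℤ) ^ (k - 1) * ((j : ℤ) + 1) ^ (n - k)) := by
  obtain ⟨m, rfl⟩ : ∃ m, n = m + 1 := ⟨n - 1, by omega⟩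
  obtain ⟨a, rfl⟩ : ∃ a : Fin (m + 1), k = a + 1 := ⟨⟨k - 1, by omega⟩, by simp; omega⟩
  have hcount (j : ℕ) : (j : ℤ) ^ ((a : ℕ) + 1 - 1) * ((j : ℤ) + 1) ^ (m + 1 - ((a : ℕ) + 1)) =
      #(leaderSet a j) := by
    simp [card_leaderSet]
  simp_rw [hcount]
  rw [mk_card_leaderSet, sum_X_pow_descents, mul_left_comm, ← mul_pow,
    mul_comm _ (PowerSeries.mk 1), PowerSeries.mk_one_mul_one_sub_eq_one, one_pow, mul_one]
end

section
/- Fix d > 0 and let p = d/(d+1). If π_n is uniform on permutations of {1,...,n} with exactly d descents, then for every ε > 0 there exists N such that for all n ≥ N and all 1 ≤ k ≤ n, |P(π_n(1)=k)/((1-p)p^{k-1}) - 1| < ε. -/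
open Finset

/-!
Write `F n p` for the generating polynomial, by number of descents, of the permutations of
`{0, …, n}` with first value `p`. Deleting the first value gives
`F (n+1) p = X * ∑_{q<p} F n q + ∑_{p≤q≤n} F n q`, and the same recurrence is satisfied by
`(1 - X)^(n+1) * ∑_i (i+1)^(n-p) i^p X^i` (coefficientwise it is a telescoping sum), a
first-value refinement of Carlitz's identity for Eulerian polynomials. Reading off the
coefficient of `X^d`, the term `i = d`, i.e. `(d+1)^(n-p) d^p`, dominates: the other `d` terms
are smaller by a factor `O(n^d (d/(d+1))^n)`, uniformly in `p`. Summing over `p` gives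
`Eul (n+1) d ~ (d+1)^(n+1)`, and the quotient of the two is the geometric law.
-/

open PowerSeries Filter Topology

section Descents

variable {α : Type*} [LT α]

def IsDescentAt {n : ℕ} (f : Fin n → α) (i : Fin n) : Prop :=
  ∃ j : Fin n, (j : ℕ) = i + 1 ∧ f j < f i

instance {n : ℕ} [DecidableLT α] (f : Fin n → α) : DecidablePred (IsDescentAt f) :=
  fun _ => inferInstanceAs (Decidable (∃ _, _))

lemma descents_eq_card (n : ℕ) (π : Equiv.Perm (Fin n)) :
    descents n π = #{i | IsDescentAt π i} := rfl

lemma isDescentAt_succ_iff {n : ℕ} (f : Fin (n + 1) → α) (i : Fin n) :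
    IsDescentAt f i.succ ↔ IsDescentAt (f ∘ Fin.succ) i := by
  constructor
  · rintro ⟨j, hj, hlt⟩
    obtain ⟨j, rfl⟩ := Fin.exists_succ_eq.2 (Fin.ne_of_val_ne (by simp [hj]) : j ≠ 0)
    exact ⟨j, by simpa using hj, hlt⟩
  · rintro ⟨j, hj, hlt⟩
    exact ⟨j.succ, by simp [hj], hlt⟩

lemma isDescentAt_zero_iff {n : ℕ} (f : Fin (n + 2) → α) : IsDescentAt f 0 ↔ f 1 < f 0 := by
  constructor
  · rintro ⟨j, hj, hlt⟩
    rwa [show j = 1 from Fin.ext (by simpa using hj)] at hlt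
  · exact fun h => ⟨1, by simp, h⟩

lemma isDescentAt_comp_iff {β : Type*} [LT β] {n : ℕ} {g : α → β} (hg : ∀ a b, g a < g b ↔ a < b)
    (f : Fin n → α) (i : Fin n) : IsDescentAt (g ∘ f) i ↔ IsDescentAt f i := by
  simp only [IsDescentAt, Function.comp, hg]

end Descents

/-- The permutation with first value `p` whose remaining values are in the relative order
of `e`. -/
def insertFirst {n : ℕ} (p : Fin (n + 1)) (e : Equiv.Perm (Fin n)) : Equiv.Perm (Fin (n + 1)) :=
  (finSuccEquiv n).trans ((Equiv.optionCongr e).trans (finSuccEquiv' p).symm)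

@[simp] lemma insertFirst_zero {n : ℕ} (p : Fin (n + 1)) (e : Equiv.Perm (Fin n)) :
    insertFirst p e 0 = p := by
  simp [insertFirst]

@[simp] lemma insertFirst_succ {n : ℕ} (p : Fin (n + 1)) (e : Equiv.Perm (Fin n)) (i : Fin n) :
    insertFirst p e i.succ = p.succAbove (e i) := by
  simp [insertFirst]

lemma insertFirst_injective {n : ℕ} (p : Fin (n + 1)) : Function.Injective (insertFirst p) := by
  intro e₁ e₂ h
  ext i
  have := congrArg (fun π : Equiv.Perm (Fin (n + 1)) => π i.succ) h
  simp only [insertFirst_succ] at this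
  exact congrArg Fin.val (Fin.succAbove_right_injective this)


lemma Equiv.optionCongr_removeNone {α : Type*} {E : Option α ≃ Option α} (h : E none = none) :
    Equiv.optionCongr (Equiv.removeNone E) = E := by
  ext1 (_ | a)
  · simp [h]
  · obtain ⟨b, hb⟩ := Option.ne_none_iff_exists'.1 fun h' =>
      Option.some_ne_none a (E.injective (h'.trans h.symm))
    simp [Equiv.removeNone_some E ⟨b, hb⟩]

lemma exists_insertFirst_eq {n : ℕ} (π : Equiv.Perm (Fin (n + 1))) :
    ∃ e, insertFirst (π 0) e = π := by
  set E := (finSuccEquiv n).symm.trans (π.trans (finSuccEquiv' (π 0)))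
  refine ⟨Equiv.removeNone E, ?_⟩
  rw [insertFirst, Equiv.optionCongr_removeNone (by simp [E])]
  ext x
  simp [E]

lemma descents_insertFirst {n : ℕ} (p : Fin (n + 2)) (e : Equiv.Perm (Fin (n + 1))) :
    descents (n + 2) (insertFirst p e) = descents (n + 1) e + if (e 0 : ℕ) < p then 1 else 0 := by
  have hzero : IsDescentAt (insertFirst p e) 0 ↔ (e 0 : ℕ) < p := by
    rw [isDescentAt_zero_iff, ← Fin.succ_zero_eq_one, insertFirst_succ, insertFirst_zero,
      Fin.succAbove_lt_iff_castSucc_lt, Fin.lt_def, Fin.val_castSucc]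
  have hcomp : insertFirst p e ∘ Fin.succ = p.succAbove ∘ e := by
    ext i; simp
  rw [descents_eq_card, Fin.card_filter_univ_succ', descents_eq_card, add_comm]
  simp only [isDescentAt_succ_iff, hcomp, hzero,
    isDescentAt_comp_iff (fun _ _ => Fin.succAbove_lt_succAbove_iff)]

def firstCount (n : ℕ) (d : ℤ) (p : ℕ) : ℕ :=
  #{π : Equiv.Perm (Fin (n + 1)) | (descents (n + 1) π : ℤ) = d ∧ (π 0 : ℕ) = p}

lemma firstCount_of_neg {n : ℕ} {d : ℤ} (hd : d < 0) (p : ℕ) : firstCount n d p = 0 := by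
  rw [firstCount, card_eq_zero, filter_eq_empty_iff]
  rintro π - ⟨h, -⟩
  omega

lemma firstCount_zero (d : ℤ) (p : ℕ) : firstCount 0 d p = if d = 0 ∧ p = 0 then 1 else 0 := by
  have hdesc : ∀ π : Equiv.Perm (Fin 1), descents 1 π = 0 := by
    intro π
    rw [descents, card_eq_zero, filter_eq_empty_iff]
    rintro i - ⟨j, hj, -⟩
    omega
  simp only [firstCount, hdesc, Fin.val_eq_zero, Nat.cast_zero]
  split_ifs with h <;> simp [eq_comm, h]

lemma firstCount_succ (n : ℕ) (d : ℤ) {p : ℕ} (hp : p ≤ n + 1) :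
    firstCount (n + 1) d p =
      ∑ q ∈ range p, firstCount n (d - 1) q + ∑ q ∈ Ico p (n + 1), firstCount n d q := by
  have hinsert : firstCount (n + 1) d p =
      #{e : Equiv.Perm (Fin (n + 1)) |
        (descents (n + 1) e : ℤ) + (if (e 0 : ℕ) < p then 1 else 0) = d} := by
    refine (card_bij (fun e _ => insertFirst ⟨p, by omega⟩ e) ?_ ?_ ?_).symm
    · intro e he
      simp only [mem_filter, mem_univ, true_and] at he ⊢
      simp [descents_insertFirst, ← he]
    · exact fun e₁ _ e₂ _ h => insertFirst_injective _ h
    · intro π hπ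
      simp only [mem_filter, mem_univ, true_and] at hπ
      obtain ⟨e, he⟩ := exists_insertFirst_eq π
      rw [show π 0 = ⟨p, by omega⟩ from Fin.ext hπ.2] at he
      refine ⟨e, ?_, he⟩
      simpa [← he, descents_insertFirst] using hπ.1
  have hfiber (q : ℕ) : #{e ∈ {e : Equiv.Perm (Fin (n + 1)) |
        (descents (n + 1) e : ℤ) + (if (e 0 : ℕ) < p then 1 else 0) = d} | (e 0 : ℕ) = q} =
      firstCount n (d - if q < p then 1 else 0) q := by
    rw [filter_filter, firstCount]
    refine congrArg card (filter_congr fun e _ => ?_)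
    constructor <;> rintro ⟨h, rfl⟩ <;> refine ⟨by omega, rfl⟩
  rw [hinsert, card_eq_sum_card_fiberwise (f := fun e : Equiv.Perm (Fin (n + 1)) => (e 0 : ℕ))
    (t := range (n + 1)) (fun e _ => mem_range.2 (e 0).isLt), ← sum_range_add_sum_Ico _ hp]
  simp only [hfiber]
  congr 1 <;> refine sum_congr rfl fun q hq => ?_
  · rw [if_pos (mem_range.1 hq)]
  · rw [if_neg (not_lt.2 (mem_Ico.1 hq).1), sub_zero]

lemma sum_Ico_add_one_pow_mul_pow {R : Type*} [CommRing R] (b : R) {n p r : ℕ} (hpr : p ≤ r)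
    (hr : r ≤ n + 1) :
    ∑ q ∈ Ico p r, (b + 1) ^ (n - q) * b ^ q =
      (b + 1) ^ (n + 1 - p) * b ^ p - (b + 1) ^ (n + 1 - r) * b ^ r := by
  have hstep : ∀ q ∈ Ico p r, (b + 1) ^ (n - q) * b ^ q =
      -((b + 1) ^ (n + 1 - (q + 1)) * b ^ (q + 1)) - -((b + 1) ^ (n + 1 - q) * b ^ q) := by
    intro q hq
    rw [show n + 1 - q = n - q + 1 by have := (mem_Ico.1 hq).2; omega, Nat.add_sub_add_right]
    ring
  rw [sum_congr rfl hstep, sum_Ico_sub (fun q => -((b + 1) ^ (n + 1 - q) * b ^ q)) hpr]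
  ring

def weight (n p i : ℕ) : ℕ := (i + 1) ^ (n - p) * i ^ p

def weightSeries (n p : ℕ) : ℤ⟦X⟧ := mk fun i => (weight n p i : ℤ)

def firstCountSeries (n p : ℕ) : ℤ⟦X⟧ := mk fun d => (firstCount n d p : ℤ)

lemma firstCountSeries_succ (n : ℕ) {p : ℕ} (hp : p ≤ n + 1) :
    firstCountSeries (n + 1) p =
      X * ∑ q ∈ range p, firstCountSeries n q + ∑ q ∈ Ico p (n + 1), firstCountSeries n q := by
  ext (_ | d)
  · simp [firstCountSeries, firstCount_succ n _ hp, firstCount_of_neg]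
  · simp [firstCountSeries, firstCount_succ n _ hp, coeff_succ_X_mul, map_sum]

lemma one_sub_X_mul_weightSeries_succ (n : ℕ) {p : ℕ} (hp : p ≤ n + 1) :
    (1 - X) * weightSeries (n + 1) p =
      X * ∑ q ∈ range p, weightSeries n q + ∑ q ∈ Ico p (n + 1), weightSeries n q := by
  ext (_ | i)
  · simpa [weightSeries, weight, map_sum] using
      (sum_Ico_add_one_pow_mul_pow (0 : ℤ) hp le_rfl).symm
  · simp only [weightSeries, weight, Nat.cast_mul, Nat.cast_pow, Nat.cast_add, Nat.cast_one,
      sub_mul, one_mul, map_sub, coeff_mk, coeff_succ_X_mul, map_add, map_sum]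
    rw [← Nat.Ico_zero_eq_range, sum_Ico_add_one_pow_mul_pow _ (Nat.zero_le p) hp,
      sum_Ico_add_one_pow_mul_pow _ hp le_rfl]
    simp

lemma one_sub_X_mul_weightSeries_zero : (1 - X) * weightSeries 0 0 = 1 := by
  ext (_ | i) <;> simp [weightSeries, weight, sub_mul, coeff_succ_X_mul]

theorem firstCountSeries_eq {n p : ℕ} (hp : p ≤ n) :
    firstCountSeries n p = (1 - X) ^ (n + 1) * weightSeries n p := by
  induction n generalizing p with
  | zero =>
    obtain rfl : p = 0 := by omega
    rw [zero_add, pow_one, one_sub_X_mul_weightSeries_zero]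
    ext d
    simp [firstCountSeries, firstCount_zero, coeff_one]
  | succ n ih =>
    have hrange : ∀ q ∈ range p, firstCountSeries n q = (1 - X) ^ (n + 1) * weightSeries n q :=
      fun q hq => ih (by have := mem_range.1 hq; omega)
    have hIco : ∀ q ∈ Ico p (n + 1), firstCountSeries n q = (1 - X) ^ (n + 1) * weightSeries n q :=
      fun q hq => ih (by have := (mem_Ico.1 hq).2; omega)
    rw [firstCountSeries_succ n (by omega), sum_congr rfl hrange, sum_congr rfl hIco, ← mul_sum,
      ← mul_sum, mul_left_comm, ← mul_add, ← one_sub_X_mul_weightSeries_succ n (by omega),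
      ← mul_assoc, ← pow_succ]

lemma coeff_one_sub_X_pow (m k : ℕ) : coeff k ((1 - X : ℤ⟦X⟧) ^ m) = (-1) ^ k * m.choose k := by
  have : (1 - X : ℤ⟦X⟧) ^ m = rescale (-1) (((1 + Polynomial.X) ^ m : Polynomial ℤ) : ℤ⟦X⟧) := by
    simp [sub_eq_add_neg]
  rw [this, coeff_rescale, Polynomial.coeff_coe, Polynomial.coeff_one_add_X_pow]

lemma firstCount_eq_sum {n p : ℕ} (hp : p ≤ n) (d : ℕ) :
    (firstCount n d p : ℤ) =
      ∑ k ∈ range (d + 1), (-1) ^ k * (n + 1).choose k * (weight n p (d - k) : ℤ) := by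
  have := congrArg (coeff d) (firstCountSeries_eq hp)
  rw [firstCountSeries, coeff_mk, coeff_mul, Nat.sum_antidiagonal_eq_sum_range_succ_mk] at this
  simpa [coeff_one_sub_X_pow, weightSeries] using this

lemma weight_mono (n p : ℕ) : Monotone (weight n p) :=
  fun _ _ h => Nat.mul_le_mul (Nat.pow_le_pow_left (by omega) _) (Nat.pow_le_pow_left h _)

lemma abs_firstCount_sub_weight_le {n p : ℕ} (hp : p ≤ n) (d : ℕ) :
    |(firstCount n d p : ℤ) - weight n p d| ≤ d * ((n + 1) ^ d * weight n p (d - 1)) := by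
  rw [firstCount_eq_sum hp, sum_range_succ']
  simp only [pow_zero, Nat.choose_zero_right, Nat.cast_one, one_mul, Nat.sub_zero,
    add_sub_cancel_right]
  calc |∑ j ∈ range d, (-1) ^ (j + 1) * ((n + 1).choose (j + 1) : ℤ) * weight n p (d - (j + 1))|
      ≤ ∑ j ∈ range d, |(-1) ^ (j + 1) * ((n + 1).choose (j + 1) : ℤ) * weight n p (d - (j + 1))| :=
        abs_sum_le_sum_abs _ _
    _ ≤ ∑ j ∈ range d, ((n + 1) ^ d * weight n p (d - 1) : ℤ) := sum_le_sum fun j hj => ?_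
    _ = _ := by simp
  rw [abs_mul, abs_mul, abs_pow, abs_neg, abs_one, one_pow, one_mul, Nat.abs_cast, Nat.abs_cast]
  exact_mod_cast Nat.mul_le_mul
    ((Nat.choose_le_pow _ _).trans (Nat.pow_le_pow_right (by omega) (mem_range.1 hj)))
    (weight_mono n p (by omega))

lemma weight_pred_mul_le {n p : ℕ} (hp : p ≤ n) {d : ℕ} (hd : 0 < d) :
    weight n p (d - 1) * (d + 1) ^ n ≤ d ^ n * weight n p d := by
  obtain ⟨e, rfl⟩ : ∃ e, d = e + 1 := ⟨d - 1, by omega⟩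
  obtain ⟨m, rfl⟩ : ∃ m, n = m + p := ⟨n - p, by omega⟩
  have key := Nat.pow_le_pow_left (show e * (e + 2) ≤ (e + 1) * (e + 1) by nlinarith) p
  rw [mul_pow, mul_pow] at key
  simp only [weight, Nat.add_sub_cancel, pow_add]
  convert Nat.mul_le_mul_left ((e + 1) ^ m * (e + 2) ^ m) key using 1 <;> ring


lemma Eul_succ_eq_sum_firstCount (n : ℕ) (d : ℤ) :
    Eul (n + 1) d = ∑ p ∈ range (n + 1), firstCount n d p := by
  rw [Eul, card_eq_sum_card_fiberwise (f := fun π : Equiv.Perm (Fin (n + 1)) => (π 0 : ℕ))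
    (t := range (n + 1)) (fun π _ => mem_range.2 (π 0).isLt)]
  simp only [filter_filter, firstCount]

lemma A_succ_eq_firstCount (n : ℕ) (d : ℤ) (p : ℕ) : A (n + 1) d (p + 1) = firstCount n d p := by
  rw [A, firstCount]
  refine congrArg card (filter_congr fun π _ => and_congr_right fun _ => ?_)
  exact ⟨fun ⟨i, hi, hp⟩ => by rwa [show i = 0 from Fin.ext hi, add_left_inj] at hp,
    fun hp => ⟨0, rfl, by rw [hp]⟩⟩

lemma sum_weight (n d : ℕ) :
    ∑ p ∈ range (n + 1), (weight n p d : ℝ) = (d + 1) ^ (n + 1) - d ^ (n + 1) := by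
  have := sum_Ico_add_one_pow_mul_pow (d : ℝ) (Nat.zero_le (n + 1)) le_rfl
  simpa [weight] using this

noncomputable def errorBound (d n : ℕ) : ℝ := d * (n + 1) ^ d * (d / (d + 1)) ^ n

lemma tendsto_errorBound {d : ℕ} (hd : 0 < d) : Tendsto (errorBound d) atTop (𝓝 0) := by
  have hr0 : (0 : ℝ) < d / (d + 1) := by positivity
  have hr1 : (d : ℝ) / (d + 1) < 1 := (div_lt_one (by positivity)).2 (by linarith)
  have h := ((tendsto_pow_const_mul_const_pow_of_lt_one d hr0.le hr1).comp
    (tendsto_add_atTop_nat 1)).const_mul ((d : ℝ) + 1)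
  rw [mul_zero] at h
  refine h.congr fun n => ?_
  simp only [Function.comp_apply, errorBound, Nat.cast_add, Nat.cast_one, pow_succ]
  field_simp

lemma abs_firstCount_sub_weight_le_errorBound {n p d : ℕ} (hp : p ≤ n) (hd : 0 < d) :
    |(firstCount n d p : ℝ) - weight n p d| ≤ errorBound d n * weight n p d := by
  have herr : |(firstCount n d p : ℝ) - weight n p d| ≤ d * ((n + 1) ^ d * weight n p (d - 1)) := by
    exact_mod_cast abs_firstCount_sub_weight_le hp d
  have hpred : (weight n p (d - 1) : ℝ) ≤ d ^ n * weight n p d / (d + 1) ^ n := by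
    rw [le_div_iff₀ (by positivity)]
    exact_mod_cast weight_pred_mul_le hp hd
  calc |(firstCount n d p : ℝ) - weight n p d| ≤ d * ((n + 1) ^ d * weight n p (d - 1)) := herr
    _ ≤ d * ((n + 1) ^ d * (d ^ n * weight n p d / (d + 1) ^ n)) := by gcongr
    _ = errorBound d n * weight n p d := by rw [errorBound, div_pow]; ring

lemma abs_firstCount_div_weight_sub_one_le {n p d : ℕ} (hp : p ≤ n) (hd : 0 < d) :
    |(firstCount n d p : ℝ) / weight n p d - 1| ≤ errorBound d n := by
  have hw : (0 : ℝ) < weight n p d := by unfold weight; positivity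
  rw [div_sub_one hw.ne', abs_div, abs_of_pos hw, div_le_iff₀ hw]
  exact abs_firstCount_sub_weight_le_errorBound hp hd

lemma abs_Eul_div_sub_one_le {d : ℕ} (hd : 0 < d) (n : ℕ) :
    |(Eul (n + 1) d : ℝ) / (d + 1) ^ (n + 1) - 1| ≤ errorBound d n + (d / (d + 1)) ^ (n + 1) := by
  have hsum : |(Eul (n + 1) d : ℝ) - ((d + 1) ^ (n + 1) - d ^ (n + 1))| ≤
      errorBound d n * ((d + 1) ^ (n + 1) - d ^ (n + 1)) := by
    rw [← sum_weight, Eul_succ_eq_sum_firstCount, Nat.cast_sum, ← sum_sub_distrib, mul_sum]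
    exact (abs_sum_le_sum_abs _ _).trans (sum_le_sum fun p hp =>
      abs_firstCount_sub_weight_le_errorBound (Nat.lt_succ_iff.1 (mem_range.1 hp)) hd)
  set E : ℝ := (Eul (n + 1) d : ℝ)
  set P : ℝ := (d + 1) ^ (n + 1)
  set D : ℝ := d ^ (n + 1)
  have hP : 0 < P := by positivity
  have hD : 0 ≤ D := by positivity
  have heb : 0 ≤ errorBound d n := by unfold errorBound; positivity
  rw [div_pow]
  change |E / P - 1| ≤ errorBound d n + D / P
  rw [div_sub_one hP.ne', abs_div, abs_of_pos hP, div_le_iff₀ hP, add_mul,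
    div_mul_cancel₀ _ hP.ne']
  calc |E - P| = |(E - (P - D)) - D| := by ring_nf
    _ ≤ |E - (P - D)| + D := by simpa [abs_of_nonneg hD] using abs_sub (E - (P - D)) D
    _ ≤ errorBound d n * P + D := by nlinarith

lemma abs_div_sub_one_le {a b η : ℝ} (ha : |a - 1| ≤ η) (hb : |b - 1| ≤ η) (hη : η ≤ 1 / 2) :
    |a / b - 1| ≤ 4 * η := by
  have hb0 : 1 / 2 ≤ b := by linarith [(abs_le.1 hb).1]
  have hη0 : 0 ≤ η := (abs_nonneg _).trans ha
  rw [div_sub_one (by linarith), abs_div, abs_of_pos (show 0 < b by linarith),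
    div_le_iff₀ (by linarith)]
  calc |a - b| = |(a - 1) - (b - 1)| := by ring_nf
    _ ≤ |a - 1| + |b - 1| := abs_sub _ _
    _ ≤ 4 * η * b := by nlinarith [mul_le_mul_of_nonneg_left hb0 hη0]

lemma div_geometric_eq (x y : ℝ) {n p d : ℕ} (hp : p ≤ n) (hd : 0 < d) :
    x / y / ((1 - d / (d + 1)) * (d / (d + 1)) ^ p) =
      x / weight n p d / (y / (d + 1) ^ (n + 1)) := by
  have hd' : (0 : ℝ) < d := by exact_mod_cast hd
  have hc : (1 - d / (d + 1) : ℝ) * (d / (d + 1)) ^ p ≠ 0 := by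
    rw [one_sub_div (by positivity), add_sub_cancel_left]
    positivity
  have hw : (weight n p d : ℝ) = (d + 1) ^ (n + 1) * ((1 - d / (d + 1)) * (d / (d + 1)) ^ p) := by
    obtain ⟨m, rfl⟩ : ∃ m, n = m + p := ⟨n - p, by omega⟩
    rw [one_sub_div (by positivity), add_sub_cancel_left, div_pow, weight, Nat.add_sub_cancel]
    push_cast
    field_simp
    ring
  rw [hw]
  field_simp

theorem stmt16 (d : ℕ) (hd : 0 < d) :
    ∀ ε : ℝ, 0 < ε → ∃ N : ℕ, ∀ n : ℕ, N ≤ n → ∀ k : ℕ, 1 ≤ k → k ≤ n →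
      |((A n (d : ℤ) k : ℝ) / (Eul n (d : ℤ) : ℝ)) /
          ((1 - (d : ℝ) / ((d : ℝ) + 1)) * ((d : ℝ) / ((d : ℝ) + 1)) ^ (k - 1)) - 1| < ε := by
  intro ε hε
  have hr0 : (0 : ℝ) ≤ d / (d + 1) := by positivity
  have hr1 : (d : ℝ) / (d + 1) < 1 := (div_lt_one (by positivity)).2 (by linarith)
  have hη : Tendsto (fun n => errorBound d n + (d / (d + 1) : ℝ) ^ (n + 1)) atTop (𝓝 0) := by
    simpa using (tendsto_errorBound hd).add
      ((tendsto_pow_atTop_nhds_zero_of_lt_one hr0 hr1).comp (tendsto_add_atTop_nat 1))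
  obtain ⟨N, hN⟩ := eventually_atTop.1
    ((tendsto_order.1 hη).2 _ (lt_min one_half_pos (div_pos hε four_pos)))
  refine ⟨N + 1, fun n hn k hk hkn => ?_⟩
  obtain ⟨m, rfl⟩ : ∃ m, n = m + 1 := ⟨n - 1, by omega⟩
  obtain ⟨p, rfl⟩ : ∃ p, k = p + 1 := ⟨k - 1, by omega⟩
  have hsmall := hN m (by omega)
  have hpm : p ≤ m := by omega
  rw [A_succ_eq_firstCount, Nat.add_sub_cancel, div_geometric_eq _ _ hpm hd]
  calc _ ≤ 4 * (errorBound d m + (d / (d + 1) : ℝ) ^ (m + 1)) :=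
        abs_div_sub_one_le
          ((abs_firstCount_div_weight_sub_one_le hpm hd).trans
            (le_add_of_nonneg_right (by positivity)))
          (abs_Eul_div_sub_one_le hd m) (hsmall.le.trans (min_le_left _ _))
    _ < ε := by linarith [min_le_right (1 / 2 : ℝ) (ε / 4)]
end

section
/- For 1 ≤ k < k+m ≤ n, the number of permutations π of {1,...,n} with d descents, π(1)=k, and π(n)=k+m equals the number of permutations of {1,...,n-1} with d descents ending in m; and the number with d descents, π(1)=k+m, π(n)=k equals the number of permutations of {1,...,n-1} with d-1 descents beginning with m. -/
open Finset

/-- Number of permutations of {1,…,n} with d descents, first value k and last value ℓ. -/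
def Aboth (n : ℕ) (d : ℤ) (k ℓ : ℕ) : ℕ :=
  (Finset.univ.filter (fun π : Equiv.Perm (Fin n) =>
    (descents n π : ℤ) = d ∧ (∃ i : Fin n, (i : ℕ) = 0 ∧ (π i : ℕ) + 1 = k) ∧
      ∃ i : Fin n, (i : ℕ) + 1 = n ∧ (π i : ℕ) + 1 = ℓ)).card

/-! ### Auxiliary arithmetic: the cyclic value shift `u ↦ u - k (mod N+1)` -/

def fnat (N k u : ℕ) : ℕ := if k ≤ u then u - k else u + (N + 1) - k
def gnat (N k v : ℕ) : ℕ := if v + k ≤ N then v + k else v + k - (N + 1)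
def gz (k u : ℕ) : ℤ := if u < k - 1 then 1 else 0

lemma fnat_lt {N k u : ℕ} (hk : 1 ≤ k) (hkN : k ≤ N) (hu : u ≤ N) (hne : u ≠ k - 1) :
    fnat N k u < N := by unfold fnat; split_ifs <;> omega

lemma gnat_le {N k v : ℕ} (hkN : k ≤ N) (hv : v < N) : gnat N k v ≤ N := by
  unfold gnat; split_ifs <;> omega

lemma gnat_ne {N k v : ℕ} (hk : 1 ≤ k) (hv : v < N) : gnat N k v ≠ k - 1 := by
  unfold gnat; split_ifs <;> omega

lemma gnat_fnat {N k u : ℕ} (hk : 1 ≤ k) (hkN : k ≤ N) (hu : u ≤ N) (hne : u ≠ k - 1) :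
    gnat N k (fnat N k u) = u := by unfold fnat gnat; split_ifs <;> omega

lemma fnat_gnat {N k v : ℕ} (hkN : k ≤ N) (hv : v < N) : fnat N k (gnat N k v) = v := by
  unfold fnat gnat; split_ifs <;> omega

lemma order {N k u v : ℕ} (hk : 1 ≤ k) (hkN : k ≤ N) (hu : u ≤ N) (hv : v ≤ N)
    (hune : u ≠ k - 1) (hvne : v ≠ k - 1) :
    (if fnat N k v < fnat N k u then (1:ℤ) else 0)
      = (if v < u then (1:ℤ) else 0) + gz k u - gz k v := by
  unfold fnat gz; split_ifs <;> omega

/-! ### Descents as an integer sum over the value sequence -/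

def pseq {n : ℕ} (π : Equiv.Perm (Fin (n+1))) (i : ℕ) : ℕ :=
  (π ⟨i % (n+1), Nat.mod_lt _ (Nat.succ_pos n)⟩ : ℕ)

lemma pseq_eq {n : ℕ} (π : Equiv.Perm (Fin (n+1))) {i : ℕ} (h : i < n+1) :
    pseq π i = (π ⟨i, h⟩ : ℕ) := by
  simp only [pseq, Nat.mod_eq_of_lt h]

lemma pseq_le {n : ℕ} (π : Equiv.Perm (Fin (n+1))) (i : ℕ) : pseq π i ≤ n := by
  unfold pseq
  exact Nat.lt_succ_iff.mp (Fin.is_lt _)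

def desZ (a : ℕ → ℕ) (L : ℕ) : ℤ := ∑ i ∈ Finset.range L, if a (i+1) < a i then 1 else 0

lemma des_eq {n : ℕ} (π : Equiv.Perm (Fin (n+1))) :
    (descents (n+1) π : ℤ) = desZ (pseq π) n := by
  unfold descents desZ
  rw [Finset.card_filter]
  push_cast
  have step : ∀ i : Fin (n+1),
      (if (∃ j : Fin (n+1), (j : ℕ) = (i : ℕ) + 1 ∧ π j < π i) then (1:ℤ) else 0)
        = (fun t : ℕ => if t < n ∧ pseq π (t+1) < pseq π t then (1:ℤ) else 0) (i : ℕ) := by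
    intro i
    apply if_congr _ rfl rfl
    constructor
    · rintro ⟨j, hj, hlt⟩
      have hlt' : (i : ℕ) + 1 < n + 1 := by have := j.isLt; omega
      refine ⟨by omega, ?_⟩
      rw [pseq_eq π hlt', pseq_eq π i.isLt]
      have : j = ⟨(i:ℕ)+1, hlt'⟩ := Fin.ext hj
      subst this
      have : (⟨(i:ℕ), i.isLt⟩ : Fin (n+1)) = i := Fin.ext rfl
      rw [this]
      exact hlt
    · rintro ⟨hi, hlt⟩
      have hlt' : (i : ℕ) + 1 < n + 1 := by omega
      refine ⟨⟨(i:ℕ)+1, hlt'⟩, rfl, ?_⟩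
      rw [pseq_eq π hlt', pseq_eq π i.isLt] at hlt
      have : (⟨(i:ℕ), i.isLt⟩ : Fin (n+1)) = i := Fin.ext rfl
      rw [this] at hlt
      exact hlt
  rw [Finset.sum_congr rfl (fun i _ => step i),
    Fin.sum_univ_eq_sum_range (fun t : ℕ => if t < n ∧ pseq π (t+1) < pseq π t then (1:ℤ) else 0),
    Finset.sum_range_succ]
  simp only [lt_self_iff_false, false_and, if_false, add_zero]
  refine Finset.sum_congr rfl (fun i hi => ?_)
  rw [Finset.mem_range] at hi
  simp [hi]

lemma desZ_rel1 {a b : ℕ → ℕ} {M k m : ℕ} (hk : 1 ≤ k) (hkM : k ≤ M + 1)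
    (ha : ∀ i, i ≤ M + 1 → a i ≤ M + 1)
    (hane : ∀ i, 1 ≤ i → i ≤ M + 1 → a i ≠ k - 1)
    (h0 : a 0 = k - 1) (hl : a (M+1) = k - 1 + m)
    (hab : ∀ i, i ≤ M → b i = fnat (M+1) k (a (i+1))) :
    desZ b M = desZ a (M+1) := by
  have key : ∀ i ∈ Finset.range M, (if b (i+1) < b i then (1:ℤ) else 0)
      = (if a (i+2) < a (i+1) then (1:ℤ) else 0)
        + (gz k (a (i+1)) - gz k (a (i+2))) := by
    intro i hi
    rw [Finset.mem_range] at hi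
    rw [hab (i+1) (by omega), hab i (by omega)]
    rw [order hk hkM (ha (i+1) (by omega)) (ha (i+2) (by omega))
      (hane (i+1) (by omega) (by omega)) (hane (i+2) (by omega) (by omega))]
    ring
  unfold desZ
  rw [Finset.sum_congr rfl key, Finset.sum_add_distrib,
    Finset.sum_range_sub' (fun i => gz k (a (i+1))),
    Finset.sum_range_succ' (fun i => if a (i+1) < a i then (1:ℤ) else 0) M]
  have h1 : gz k (a (M+1)) = 0 := by unfold gz; rw [hl]; rw [if_neg (by omega)]
  have h2 : gz k (a 1) = if a (0+1) < a 0 then (1:ℤ) else 0 := by unfold gz; rw [h0]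
  rw [h1, h2]
  ring

lemma desZ_rel2 {a b : ℕ → ℕ} {M k m : ℕ} (hk : 1 ≤ k) (hkM : k ≤ M + 1) (hm : 1 ≤ m)
    (ha : ∀ i, i ≤ M + 1 → a i ≤ M + 1)
    (hane : ∀ i, i ≤ M → a i ≠ k - 1)
    (h0 : a 0 = k - 1 + m) (hl : a (M+1) = k - 1)
    (hab : ∀ i, i ≤ M → b i = fnat (M+1) k (a i)) :
    desZ b M = desZ a (M+1) - 1 := by
  have key : ∀ i ∈ Finset.range M, (if b (i+1) < b i then (1:ℤ) else 0)
      = (if a (i+1) < a i then (1:ℤ) else 0)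
        + (gz k (a i) - gz k (a (i+1))) := by
    intro i hi
    rw [Finset.mem_range] at hi
    rw [hab (i+1) (by omega), hab i (by omega)]
    rw [order hk hkM (ha i (by omega)) (ha (i+1) (by omega))
      (hane i (by omega)) (hane (i+1) (by omega))]
    ring
  unfold desZ
  rw [Finset.sum_congr rfl key, Finset.sum_add_distrib,
    Finset.sum_range_sub' (fun i => gz k (a i)),
    Finset.sum_range_succ (fun i => if a (i+1) < a i then (1:ℤ) else 0) M]
  have h0' : gz k (a 0) = 0 := by unfold gz; rw [h0]; rw [if_neg (by omega)]
  have hM := hane M (le_refl M)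
  have : gz k (a M) + (if a (M+1) < a M then (1:ℤ) else 0) = 1 := by
    unfold gz; rw [hl]; split_ifs <;> omega
  rw [h0']
  omega

/-! ### The bijections -/

section
variable {M k : ℕ} (hk : 1 ≤ k) (hkM : k ≤ M + 1)

lemma ne_first {π : Equiv.Perm (Fin (M+2))} (h0 : (π 0 : ℕ) = k - 1) (x : Fin (M+2))
    (hx : x ≠ 0) : (π x : ℕ) ≠ k - 1 := by
  intro h
  exact hx (π.injective (Fin.ext (h.trans h0.symm)))

noncomputable def phi1 (π : Equiv.Perm (Fin (M+2))) (h0 : (π 0 : ℕ) = k - 1) :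
    Equiv.Perm (Fin (M+1)) :=
  Equiv.ofBijective
    (fun i => ⟨fnat (M+1) k (π i.succ),
      fnat_lt hk hkM (by omega) (ne_first h0 i.succ (Fin.succ_ne_zero i))⟩)
    (Finite.injective_iff_bijective.mp (by
      intro i j h
      have h' : fnat (M+1) k (π i.succ) = fnat (M+1) k (π j.succ) := congrArg Fin.val h
      have e1 := gnat_fnat (u := (π i.succ : ℕ)) hk hkM (by omega)
        (ne_first h0 i.succ (Fin.succ_ne_zero i))
      have e2 := gnat_fnat (u := (π j.succ : ℕ)) hk hkM (by omega)
        (ne_first h0 j.succ (Fin.succ_ne_zero j))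
      rw [h'] at e1
      have : π i.succ = π j.succ := Fin.ext (e1.symm.trans e2)
      exact Fin.succ_injective _ (π.injective this)))

lemma phi1_apply (π : Equiv.Perm (Fin (M+2))) (h0 : (π 0 : ℕ) = k - 1) (i : Fin (M+1)) :
    (phi1 hk hkM π h0 i : ℕ) = fnat (M+1) k (π i.succ) := rfl

def psi1Fun (σ : Equiv.Perm (Fin (M+1))) : Fin (M+2) → Fin (M+2) :=
  fun x => Fin.cases ⟨k - 1, by omega⟩
    (fun i => ⟨gnat (M+1) k (σ i), by have := gnat_le hkM (σ i).isLt; omega⟩) x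

lemma psi1Fun_zero (σ : Equiv.Perm (Fin (M+1))) : (psi1Fun hk hkM σ 0 : ℕ) = k - 1 := rfl

lemma psi1Fun_succ (σ : Equiv.Perm (Fin (M+1))) (i : Fin (M+1)) :
    (psi1Fun hk hkM σ i.succ : ℕ) = gnat (M+1) k (σ i) := by
  unfold psi1Fun
  rw [Fin.cases_succ]

noncomputable def psi1 (σ : Equiv.Perm (Fin (M+1))) : Equiv.Perm (Fin (M+2)) :=
  Equiv.ofBijective (psi1Fun hk hkM σ)
    (Finite.injective_iff_bijective.mp (by
      intro x y h
      have h' : (psi1Fun hk hkM σ x : ℕ) = (psi1Fun hk hkM σ y : ℕ) := congrArg Fin.val h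
      clear h
      induction x using Fin.cases with
      | zero => induction y using Fin.cases with
        | zero => rfl
        | succ j =>
          rw [psi1Fun_zero, psi1Fun_succ] at h'
          exact absurd h'.symm (gnat_ne hk (σ j).isLt)
      | succ i => induction y using Fin.cases with
        | zero =>
          rw [psi1Fun_zero, psi1Fun_succ] at h'
          exact absurd h' (gnat_ne hk (σ i).isLt)
        | succ j =>
          rw [psi1Fun_succ, psi1Fun_succ] at h'
          have e1 := fnat_gnat (v := ((σ i) : ℕ)) hkM (σ i).isLt
          have e2 := fnat_gnat (v := ((σ j) : ℕ)) hkM (σ j).isLt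
          rw [h'] at e1
          have : σ i = σ j := Fin.ext (e1.symm.trans e2)
          exact congrArg Fin.succ (σ.injective this)))

lemma psi1_zero (σ : Equiv.Perm (Fin (M+1))) : (psi1 hk hkM σ 0 : ℕ) = k - 1 := rfl

lemma psi1_succ (σ : Equiv.Perm (Fin (M+1))) (i : Fin (M+1)) :
    (psi1 hk hkM σ i.succ : ℕ) = gnat (M+1) k (σ i) := psi1Fun_succ hk hkM σ i

lemma psi1_phi1 (π : Equiv.Perm (Fin (M+2))) (h0 : (π 0 : ℕ) = k - 1) :
    psi1 hk hkM (phi1 hk hkM π h0) = π := by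
  apply Equiv.ext
  intro x
  induction x using Fin.cases with
  | zero => exact Fin.ext ((psi1_zero hk hkM _).trans h0.symm)
  | succ i =>
    apply Fin.ext
    rw [psi1_succ hk hkM _ i, phi1_apply hk hkM π h0 i]
    exact gnat_fnat hk hkM (by omega) (ne_first h0 i.succ (Fin.succ_ne_zero i))

lemma phi1_psi1 (σ : Equiv.Perm (Fin (M+1))) (h0 : ((psi1 hk hkM σ) 0 : ℕ) = k - 1) :
    phi1 hk hkM (psi1 hk hkM σ) h0 = σ := by
  apply Equiv.ext
  intro i
  apply Fin.ext
  rw [phi1_apply hk hkM _ h0 i, psi1_succ hk hkM σ i]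
  exact fnat_gnat hkM (σ i).isLt

lemma ne_last {π : Equiv.Perm (Fin (M+2))} (hl : (π (Fin.last (M+1)) : ℕ) = k - 1)
    (x : Fin (M+2)) (hx : x ≠ Fin.last (M+1)) : (π x : ℕ) ≠ k - 1 := by
  intro h
  exact hx (π.injective (Fin.ext (h.trans hl.symm)))

noncomputable def phi2 (π : Equiv.Perm (Fin (M+2))) (hl : (π (Fin.last (M+1)) : ℕ) = k - 1) :
    Equiv.Perm (Fin (M+1)) :=
  Equiv.ofBijective
    (fun i => ⟨fnat (M+1) k (π i.castSucc),
      fnat_lt hk hkM (by omega) (ne_last hl i.castSucc (Fin.castSucc_lt_last i).ne)⟩)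
    (Finite.injective_iff_bijective.mp (by
      intro i j h
      have h' : fnat (M+1) k (π i.castSucc) = fnat (M+1) k (π j.castSucc) := congrArg Fin.val h
      have e1 := gnat_fnat (u := (π i.castSucc : ℕ)) hk hkM (by omega)
        (ne_last hl i.castSucc (Fin.castSucc_lt_last i).ne)
      have e2 := gnat_fnat (u := (π j.castSucc : ℕ)) hk hkM (by omega)
        (ne_last hl j.castSucc (Fin.castSucc_lt_last j).ne)
      rw [h'] at e1
      have : π i.castSucc = π j.castSucc := Fin.ext (e1.symm.trans e2)
      exact Fin.castSucc_injective _ (π.injective this)))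

lemma phi2_apply (π : Equiv.Perm (Fin (M+2))) (hl : (π (Fin.last (M+1)) : ℕ) = k - 1)
    (i : Fin (M+1)) : (phi2 hk hkM π hl i : ℕ) = fnat (M+1) k (π i.castSucc) := rfl

def psi2Fun (σ : Equiv.Perm (Fin (M+1))) : Fin (M+2) → Fin (M+2) :=
  fun x => Fin.lastCases ⟨k - 1, by omega⟩
    (fun i => ⟨gnat (M+1) k (σ i), by have := gnat_le hkM (σ i).isLt; omega⟩) x

lemma psi2Fun_last (σ : Equiv.Perm (Fin (M+1))) :
    (psi2Fun hk hkM σ (Fin.last (M+1)) : ℕ) = k - 1 := by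
  unfold psi2Fun
  rw [Fin.lastCases_last]

lemma psi2Fun_castSucc (σ : Equiv.Perm (Fin (M+1))) (i : Fin (M+1)) :
    (psi2Fun hk hkM σ i.castSucc : ℕ) = gnat (M+1) k (σ i) := by
  unfold psi2Fun
  rw [Fin.lastCases_castSucc]

noncomputable def psi2 (σ : Equiv.Perm (Fin (M+1))) : Equiv.Perm (Fin (M+2)) :=
  Equiv.ofBijective (psi2Fun hk hkM σ)
    (Finite.injective_iff_bijective.mp (by
      intro x y h
      have h' : (psi2Fun hk hkM σ x : ℕ) = (psi2Fun hk hkM σ y : ℕ) := congrArg Fin.val h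
      clear h
      induction x using Fin.lastCases with
      | last => induction y using Fin.lastCases with
        | last => rfl
        | cast j =>
          rw [psi2Fun_last, psi2Fun_castSucc] at h'
          exact absurd h'.symm (gnat_ne hk (σ j).isLt)
      | cast i => induction y using Fin.lastCases with
        | last =>
          rw [psi2Fun_last, psi2Fun_castSucc] at h'
          exact absurd h' (gnat_ne hk (σ i).isLt)
        | cast j =>
          rw [psi2Fun_castSucc, psi2Fun_castSucc] at h'
          have e1 := fnat_gnat (v := ((σ i) : ℕ)) hkM (σ i).isLt
          have e2 := fnat_gnat (v := ((σ j) : ℕ)) hkM (σ j).isLt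
          rw [h'] at e1
          have : σ i = σ j := Fin.ext (e1.symm.trans e2)
          exact congrArg Fin.castSucc (σ.injective this)))

lemma psi2_last (σ : Equiv.Perm (Fin (M+1))) :
    (psi2 hk hkM σ (Fin.last (M+1)) : ℕ) = k - 1 := psi2Fun_last hk hkM σ

lemma psi2_castSucc (σ : Equiv.Perm (Fin (M+1))) (i : Fin (M+1)) :
    (psi2 hk hkM σ i.castSucc : ℕ) = gnat (M+1) k (σ i) := psi2Fun_castSucc hk hkM σ i

lemma psi2_phi2 (π : Equiv.Perm (Fin (M+2))) (hl : (π (Fin.last (M+1)) : ℕ) = k - 1) :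
    psi2 hk hkM (phi2 hk hkM π hl) = π := by
  apply Equiv.ext
  intro x
  induction x using Fin.lastCases with
  | last => exact Fin.ext ((psi2_last hk hkM _).trans hl.symm)
  | cast i =>
    apply Fin.ext
    rw [psi2_castSucc hk hkM _ i, phi2_apply hk hkM π hl i]
    exact gnat_fnat hk hkM (by omega) (ne_last hl i.castSucc (Fin.castSucc_lt_last i).ne)

lemma phi2_psi2 (σ : Equiv.Perm (Fin (M+1)))
    (hl : ((psi2 hk hkM σ) (Fin.last (M+1)) : ℕ) = k - 1) :
    phi2 hk hkM (psi2 hk hkM σ) hl = σ := by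
  apply Equiv.ext
  intro i
  apply Fin.ext
  rw [phi2_apply hk hkM _ hl i, psi2_castSucc hk hkM σ i]
  exact fnat_gnat hkM (σ i).isLt

/-! ### Descents under the bijections -/

lemma des_phi1 {m : ℕ} (π : Equiv.Perm (Fin (M+2))) (h0 : (π 0 : ℕ) = k - 1)
    (hl : (π (Fin.last (M+1)) : ℕ) = k - 1 + m) :
    (descents (M+1) (phi1 hk hkM π h0) : ℤ) = (descents (M+2) π : ℤ) := by
  rw [des_eq, des_eq]
  apply desZ_rel1 (m := m) hk hkM
  · intro i _
    exact pseq_le π i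
  · intro i h1 h2
    rw [pseq_eq π (by omega)]
    exact ne_first h0 ⟨i, by omega⟩ (by
      intro hh
      have := congrArg Fin.val hh
      simp at this
      omega)
  · rw [pseq_eq π (by omega)]
    have : (⟨0, by omega⟩ : Fin (M+2)) = 0 := by ext; simp
    rw [this, h0]
  · rw [pseq_eq π (by omega)]
    have : (⟨M+1, by omega⟩ : Fin (M+2)) = Fin.last (M+1) := by ext; simp [Fin.last]
    rw [this, hl]
  · intro i hi
    rw [pseq_eq _ (show i < M+1 by omega), pseq_eq π (show i+1 < M+2 by omega),
      phi1_apply hk hkM π h0]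
    have : (⟨i, show i < M+1 by omega⟩ : Fin (M+1)).succ = (⟨i+1, by omega⟩ : Fin (M+2)) := by
      ext; simp
    rw [this]

lemma des_phi2 {m : ℕ} (hm : 1 ≤ m) (π : Equiv.Perm (Fin (M+2)))
    (hl : (π (Fin.last (M+1)) : ℕ) = k - 1)
    (h0 : (π 0 : ℕ) = k - 1 + m) :
    (descents (M+1) (phi2 hk hkM π hl) : ℤ) = (descents (M+2) π : ℤ) - 1 := by
  rw [des_eq, des_eq]
  apply desZ_rel2 (m := m) hk hkM hm
  · intro i _
    exact pseq_le π i
  · intro i h1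
    rw [pseq_eq π (by omega)]
    exact ne_last hl ⟨i, by omega⟩ (by
      intro hh
      have := congrArg Fin.val hh
      simp [Fin.last] at this
      omega)
  · rw [pseq_eq π (by omega)]
    have : (⟨0, by omega⟩ : Fin (M+2)) = 0 := by ext; simp
    rw [this, h0]
  · rw [pseq_eq π (by omega)]
    have : (⟨M+1, by omega⟩ : Fin (M+2)) = Fin.last (M+1) := by ext; simp [Fin.last]
    rw [this, hl]
  · intro i hi
    rw [pseq_eq _ (show i < M+1 by omega), pseq_eq π (show i < M+2 by omega),
      phi2_apply hk hkM π hl]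
    have : (⟨i, show i < M+1 by omega⟩ : Fin (M+1)).castSucc = (⟨i, by omega⟩ : Fin (M+2)) := by
      ext; simp
    rw [this]

end

/-! ### Unpacking the first/last value conditions -/

lemma ex_first {n : ℕ} (π : Equiv.Perm (Fin (n+1))) (t : ℕ) :
    (∃ i : Fin (n+1), (i : ℕ) = 0 ∧ (π i : ℕ) + 1 = t) ↔ (π 0 : ℕ) + 1 = t := by
  constructor
  · rintro ⟨i, h1, h2⟩
    have : i = 0 := Fin.ext (by simpa using h1)
    rwa [this] at h2
  · intro h
    exact ⟨0, by simp, h⟩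

lemma ex_last {n : ℕ} (π : Equiv.Perm (Fin (n+1))) (t : ℕ) :
    (∃ i : Fin (n+1), (i : ℕ) + 1 = n + 1 ∧ (π i : ℕ) + 1 = t) ↔
      (π (Fin.last n) : ℕ) + 1 = t := by
  constructor
  · rintro ⟨i, h1, h2⟩
    have : i = Fin.last n := Fin.ext (by simp [Fin.last]; omega)
    rwa [this] at h2
  · intro h
    exact ⟨Fin.last n, by simp [Fin.last], h⟩

/-! ### The two counting lemmas -/

lemma count1 {M k m : ℕ} (hk : 1 ≤ k) (hm : 1 ≤ m) (hkm : k + m ≤ M + 2) (d : ℤ) :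
    Aboth (M+2) d k (k+m) = Alast (M+1) d m := by
  have hkM : k ≤ M + 1 := by omega
  unfold Aboth Alast
  refine Finset.card_bij'
    (fun π hπ => phi1 hk hkM π (by
      have h := (Finset.mem_filter.mp hπ).2.2.1
      rw [ex_first] at h
      omega))
    (fun σ _ => psi1 hk hkM σ) ?_ ?_ ?hli1 ?hri1
  case hli1 =>
    intro π hπ
    exact psi1_phi1 hk hkM π _
  case hri1 =>
    intro σ hσ
    exact phi1_psi1 hk hkM σ _
  · -- hi : image in target filter
    intro π hπ
    rw [Finset.mem_filter] at hπ ⊢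
    obtain ⟨-, hd, hf, hlst⟩ := hπ
    rw [ex_first] at hf
    rw [ex_last] at hlst
    have h0 : (π 0 : ℕ) = k - 1 := by omega
    have hl : (π (Fin.last (M+1)) : ℕ) = k - 1 + m := by omega
    refine ⟨Finset.mem_univ _, ?_, ?_⟩
    · rw [des_phi1 hk hkM π h0 hl]
      exact hd
    · rw [ex_last]
      have hsucc : (Fin.last M).succ = Fin.last (M+1) := by ext; simp [Fin.last]
      rw [phi1_apply hk hkM π _ (Fin.last M), hsucc, hl]
      unfold fnat
      split_ifs <;> omega
  · -- hj
    intro σ hσ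
    show psi1 hk hkM σ ∈ _
    rw [Finset.mem_filter] at hσ ⊢
    obtain ⟨-, hd, hlst⟩ := hσ
    rw [ex_last] at hlst
    have h0 : ((psi1 hk hkM σ) 0 : ℕ) = k - 1 := psi1_zero hk hkM σ
    have hsucc : (Fin.last M).succ = Fin.last (M+1) := by ext; simp [Fin.last]
    have hl : ((psi1 hk hkM σ) (Fin.last (M+1)) : ℕ) = k - 1 + m := by
      rw [← hsucc, psi1_succ hk hkM σ (Fin.last M)]
      unfold gnat
      split_ifs <;> omega
    refine ⟨Finset.mem_univ _, ?_, ?_, ?_⟩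
    · have := des_phi1 hk hkM (psi1 hk hkM σ) h0 hl
      rw [phi1_psi1 hk hkM σ h0] at this
      rw [← this]
      exact hd
    · rw [ex_first]
      omega
    · rw [ex_last]
      omega

lemma count2 {M k m : ℕ} (hk : 1 ≤ k) (hm : 1 ≤ m) (hkm : k + m ≤ M + 2) (d : ℤ) :
    Aboth (M+2) d (k+m) k = A (M+1) (d-1) m := by
  have hkM : k ≤ M + 1 := by omega
  unfold Aboth A
  refine Finset.card_bij'
    (fun π hπ => phi2 hk hkM π (by
      have h := (Finset.mem_filter.mp hπ).2.2.2
      rw [ex_last] at h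
      omega))
    (fun σ _ => psi2 hk hkM σ) ?_ ?_ ?hli2 ?hri2
  case hli2 =>
    intro π hπ
    exact psi2_phi2 hk hkM π _
  case hri2 =>
    intro σ hσ
    exact phi2_psi2 hk hkM σ _
  · intro π hπ
    rw [Finset.mem_filter] at hπ ⊢
    obtain ⟨-, hd, hf, hlst⟩ := hπ
    rw [ex_first] at hf
    rw [ex_last] at hlst
    have hl : (π (Fin.last (M+1)) : ℕ) = k - 1 := by omega
    have h0 : (π 0 : ℕ) = k - 1 + m := by omega
    refine ⟨Finset.mem_univ _, ?_, ?_⟩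
    · rw [des_phi2 hk hkM hm π hl h0, hd]
    · rw [ex_first]
      have hcs : (0 : Fin (M+1)).castSucc = (0 : Fin (M+2)) := by ext; simp
      rw [phi2_apply hk hkM π _ 0, hcs, h0]
      unfold fnat
      split_ifs <;> omega
  · intro σ hσ
    show psi2 hk hkM σ ∈ _
    rw [Finset.mem_filter] at hσ ⊢
    obtain ⟨-, hd, hf⟩ := hσ
    rw [ex_first] at hf
    have hl : ((psi2 hk hkM σ) (Fin.last (M+1)) : ℕ) = k - 1 := psi2_last hk hkM σ
    have hcs : (0 : Fin (M+1)).castSucc = (0 : Fin (M+2)) := by ext; simp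
    have h0 : ((psi2 hk hkM σ) 0 : ℕ) = k - 1 + m := by
      rw [← hcs, psi2_castSucc hk hkM σ 0]
      unfold gnat
      split_ifs <;> omega
    refine ⟨Finset.mem_univ _, ?_, ?_, ?_⟩
    · have := des_phi2 hk hkM hm (psi2 hk hkM σ) hl h0
      rw [phi2_psi2 hk hkM σ hl] at this
      rw [hd] at this
      omega
    · rw [ex_first]
      omega
    · rw [ex_last]
      omega

theorem stmt18 (n k m : ℕ) (hk : 1 ≤ k) (hm : 0 < m) (hkm : k + m ≤ n) (d : ℤ) :
    Aboth n d k (k + m) = Alast (n - 1) d m ∧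
      Aboth n d (k + m) k = A (n - 1) (d - 1) m := by
  obtain ⟨M, rfl⟩ : ∃ M, n = M + 2 := ⟨n - 2, by omega⟩
  have h1 : M + 2 - 1 = M + 1 := rfl
  rw [h1]
  exact ⟨count1 hk hm hkm d, count2 hk hm hkm d⟩
end

section
/- Let π ∈ S_n and let ψ be the n-cycle sending each j>1 to j-1 and 1 to n. Then Des(ψ∘π) - Des(π) equals 1 if π(1)=1, equals -1 if π(n)=1, and equals 0 otherwise. -/
open Finset

theorem stmt19 (n : ℕ) (hn : 2 ≤ n) (π ψ : Equiv.Perm (Fin n))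
    (hψ : ∀ j : Fin n, (ψ j : ℕ) = ((j : ℕ) + (n - 1)) % n) :
    (descents n (ψ * π) : ℤ) - (descents n π : ℤ) =
      if π ⟨0, by omega⟩ = (⟨0, by omega⟩ : Fin n) then 1
      else if π ⟨n - 1, by omega⟩ = (⟨0, by omega⟩ : Fin n) then -1
      else 0 := by
  have hψ' : ∀ a : Fin n, (ψ a : ℕ) = if (a:ℕ) = 0 then n - 1 else (a:ℕ) - 1 := by
    intro a
    have ha := a.isLt
    rw [hψ a]
    by_cases h0 : (a:ℕ) = 0
    · rw [if_pos h0, h0, Nat.zero_add, Nat.mod_eq_of_lt (by omega)]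
    · rw [if_neg h0]
      have h1 : (a:ℕ) + (n-1) = ((a:ℕ) - 1) + 1*n := by omega
      rw [h1, Nat.add_mul_mod_self_right, Nat.mod_eq_of_lt (by omega)]
  set D : Equiv.Perm (Fin n) → Fin n → ℤ := fun σ i =>
    if (∃ j : Fin n, (j:ℕ) = (i:ℕ) + 1 ∧ σ j < σ i) then 1 else 0 with hD
  have hdes : ∀ σ : Equiv.Perm (Fin n), (descents n σ : ℤ) = ∑ i : Fin n, D σ i := by
    intro σ
    rw [descents, Finset.card_filter]
    push_cast
    rfl
  set E : ℕ → ℤ := fun k => if h : k < n then (if (π ⟨k, h⟩ : ℕ) = 0 then 1 else 0) else 0 with hE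
  have key : ∀ i : Fin n, D (ψ * π) i - D π i =
      (if (i:ℕ) + 1 < n then E (i:ℕ) else 0) - E ((i:ℕ) + 1) := by
    intro i
    by_cases h : (i:ℕ) + 1 < n
    · have hjn : ∀ σ : Equiv.Perm (Fin n),
          (∃ j : Fin n, (j:ℕ) = (i:ℕ) + 1 ∧ σ j < σ i) ↔ σ ⟨(i:ℕ)+1, h⟩ < σ i := by
        intro σ
        constructor
        · rintro ⟨j, hj1, hj2⟩
          have : j = ⟨(i:ℕ)+1, h⟩ := Fin.ext hj1
          rwa [this] at hj2
        · intro hh; exact ⟨_, rfl, hh⟩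
      set j : Fin n := ⟨(i:ℕ)+1, h⟩ with hjdef
      have hij : π j ≠ π i := by
        intro hc
        have h2 := π.injective hc
        have h3 : (j : ℕ) = (i : ℕ) := by rw [h2]
        simp [hjdef] at h3
      have h1 : (π i : ℕ) ≠ (π j : ℕ) := fun hc => hij (Fin.ext hc.symm)
      have hcomp : ((ψ * π) j < (ψ * π) i) ↔
          ((π i : ℕ) = 0 ∨ ((π j : ℕ) ≠ 0 ∧ (π j : ℕ) < (π i : ℕ))) := by
        show (ψ (π j) < ψ (π i)) ↔ _
        rw [Fin.lt_def, hψ' (π i), hψ' (π j)]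
        have h2 := (π i).isLt
        have h3 := (π j).isLt
        split_ifs <;> omega
      have hD1 : D (ψ * π) i =
          if ((π i : ℕ) = 0 ∨ ((π j : ℕ) ≠ 0 ∧ (π j : ℕ) < (π i : ℕ))) then 1 else 0 := by
        simp only [hD]
        rw [if_congr ((hjn (ψ * π)).trans hcomp) rfl rfl]
      have hD2 : D π i = if (π j : ℕ) < (π i : ℕ) then 1 else 0 := by
        simp only [hD]
        rw [if_congr ((hjn π).trans (Fin.lt_def)) rfl rfl]
      have hEi : E (i:ℕ) = if (π i : ℕ) = 0 then 1 else 0 := by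
        simp only [hE]
        rw [dif_pos (show (i:ℕ) < n by omega)]
      have hEj : E ((i:ℕ) + 1) = if (π j : ℕ) = 0 then 1 else 0 := by
        simp only [hE]
        rw [dif_pos h]
      rw [hD1, hD2, if_pos h, hEi, hEj]
      split_ifs <;> omega
    · have hno : ∀ σ : Equiv.Perm (Fin n), ¬ (∃ j : Fin n, (j:ℕ) = (i:ℕ) + 1 ∧ σ j < σ i) := by
        rintro σ ⟨j, hj1, -⟩
        have := j.isLt; omega
      have hEn : E ((i:ℕ) + 1) = 0 := by
        simp only [hE]; exact dif_neg (by omega)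
      have hD1 : D (ψ * π) i = 0 := by simp only [hD]; exact if_neg (hno _)
      have hD2 : D π i = 0 := by simp only [hD]; exact if_neg (hno _)
      rw [hD1, hD2, if_neg h, hEn]
  rw [hdes, hdes, ← Finset.sum_sub_distrib, Finset.sum_congr rfl (fun i _ => key i)]
  rw [Fin.sum_univ_eq_sum_range (fun k => (if k + 1 < n then E k else 0) - E (k + 1)) n]
  obtain ⟨m, hm⟩ : ∃ m, n = m + 1 := ⟨n - 1, by omega⟩
  have hEtop : E (m + 1) = 0 := by simp only [hE]; exact dif_neg (by omega)
  have hstep : ∑ k ∈ Finset.range n, ((if k + 1 < n then E k else 0) - E (k + 1))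
      = E 0 - E (n - 1) := by
    conv_lhs => rw [hm]
    rw [Finset.sum_range_succ]
    have hlast : (if m + 1 < m + 1 then E m else 0) - E (m + 1) = 0 := by
      rw [if_neg (lt_irrefl _), hEtop]; ring
    rw [hlast, add_zero]
    have hcg : ∑ k ∈ Finset.range m, ((if k + 1 < m + 1 then E k else 0) - E (k + 1))
        = ∑ k ∈ Finset.range m, (E k - E (k + 1)) := by
      apply Finset.sum_congr rfl
      intro k hk
      rw [Finset.mem_range] at hk
      rw [if_pos (show k + 1 < m + 1 by omega)]
    rw [hcg, Finset.sum_range_sub' E m]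
    have hm' : n - 1 = m := by omega
    rw [hm']
  rw [hstep]
  have hboth : ∀ (p : 0 < n) (q : n - 1 < n),
      ¬ ((π ⟨0, p⟩ : ℕ) = 0 ∧ (π ⟨n - 1, q⟩ : ℕ) = 0) := by
    rintro p q ⟨ha, hb⟩
    have h1 : π ⟨0, p⟩ = π ⟨n - 1, q⟩ := Fin.ext (by omega)
    have h2 := π.injective h1
    have h3 := congrArg Fin.val h2
    simp at h3
    omega
  simp only [hE]
  rw [dif_pos (show 0 < n by omega), dif_pos (show n - 1 < n by omega)]
  simp only [Fin.ext_iff]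
  generalize_proofs p1 p2 p3 p4 p5
  have hb := hboth p1 p2
  split_ifs <;> simp_all
end
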